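/- arXiv:1705.08008 — 7 statements merged into one kernel-verified Lean document; each statement's English description precedes it below -/
import Mathlib

section
/- Let K be a compact convex subset of a finite-dimensional real vector space, V(K) the span of K in its canonical embedding as a base of the cone V(K)⁺, with base norm ‖ψ‖_K = inf{a + b : ψ = a·x − b·y, a,b ≥ 0, x,y ∈ K} and effect set E(K) = {f affine on K : 0 ≤ f ≤ 1}. Then for every ψ ∈ V(K), max_{f ∈ E(K)} ⟨f, ψ⟩ = ½(‖ψ‖_K + ⟨1_K, ψ⟩). -/
open Set

/-- Supporting functional for a symmetric convex set at a "boundary" point. -/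
lemma support_functional {W : Type*} [NormedAddCommGroup W] [NormedSpace ℝ W]
    [FiniteDimensional ℝ W] (B : Set W) (hB : Convex ℝ B)
    (hsym : ∀ p ∈ B, -p ∈ B) (q : W) (hq : q ∈ B) (hq0 : q ≠ 0)
    (hmin : ∀ δ : ℝ, 0 < δ → (1 + δ) • q ∉ B) :
    ∃ g : W →ₗ[ℝ] ℝ, g q = 1 ∧ ∀ p ∈ B, g p ≤ 1 := by
  classical
  set V : Submodule ℝ W := Submodule.span ℝ B with hV
  have hBV : B ⊆ (V : Set W) := Submodule.subset_span
  set B' : Set V := Subtype.val ⁻¹' B with hB'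
  have hB'conv : Convex ℝ B' := hB.linear_preimage V.subtype
  have hqV : q ∈ V := hBV hq
  have h0B : (0 : W) ∈ B := by
    have := hB hq (hsym q hq) (by norm_num : (0:ℝ) ≤ (1:ℝ)/2)
      (by norm_num : (0:ℝ) ≤ (1:ℝ)/2) (by norm_num)
    simpa using this
  have h0B' : (0 : V) ∈ B' := by simpa [hB'] using h0B
  -- span of B' is everything
  have hspan' : Submodule.span ℝ B' = (⊤ : Submodule ℝ V) := by
    apply Submodule.map_injective_of_injective V.injective_subtype
    rw [Submodule.map_span]
    have himg : V.subtype '' B' = B := by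
      ext p
      constructor
      · rintro ⟨p', hp', rfl⟩; exact hp'
      · intro hp; exact ⟨⟨p, hBV hp⟩, hp, rfl⟩
    rw [himg, Submodule.map_top, Submodule.range_subtype]
  have haff : affineSpan ℝ B' = ⊤ := by
    rw [AffineSubspace.affineSpan_eq_top_iff_vectorSpan_eq_top_of_nonempty ℝ V V (s := B') ⟨0, h0B'⟩]
    rw [eq_top_iff, ← hspan']
    apply Submodule.span_le.2
    intro v hv
    have hmem : v ∈ B' -ᵥ B' := by
      have : v - 0 ∈ B' -ᵥ B' := Set.vsub_mem_vsub hv h0B'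
      simpa using this
    rw [vectorSpan_def]
    exact Submodule.subset_span hmem
  have hint : (interior B').Nonempty := (hB'conv.interior_nonempty_iff_affineSpan_eq_top).2 haff
  -- 0 is in the interior
  obtain ⟨z, hz⟩ := hint
  have hsym' : ∀ p : V, p ∈ B' → -p ∈ B' := by
    intro p hp
    simpa [hB'] using hsym p hp
  have hBneg : -B' = B' := by
    ext p; constructor
    · intro hp; simpa using hsym' (-p) (by simpa using hp)
    · intro hp; simpa using hsym' p hp
  have hnegint : -z ∈ interior B' := by
    have hopen : IsOpen (-(interior B') : Set V) := isOpen_interior.neg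
    have hsub : (-(interior B') : Set V) ⊆ B' := by
      intro p hp
      have : -p ∈ interior B' := by simpa using hp
      have := interior_subset this
      simpa using hsym' (-p) this
    have : (-(interior B') : Set V) ⊆ interior B' := hopen.subset_interior_iff.2 hsub
    exact this (by simpa using hz)
  have h0int : (0 : V) ∈ interior B' := by
    have := hB'conv.interior hz hnegint (by norm_num : (0:ℝ) ≤ (1:ℝ)/2)
      (by norm_num : (0:ℝ) ≤ (1:ℝ)/2) (by norm_num)
    simpa using this
  set q' : V := ⟨q, hqV⟩ with hq'
  have hq'B : q' ∈ B' := by simpa [hB', hq'] using hq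
  have hq'nint : q' ∉ interior B' := by
    intro hmem
    rw [mem_interior_iff_mem_nhds, Metric.mem_nhds_iff] at hmem
    obtain ⟨ε, hε, hball⟩ := hmem
    have hqnorm : 0 < ‖q'‖ := by
      simp only [hq']
      rw [norm_pos_iff]
      exact fun h => hq0 (by simpa using congrArg Subtype.val h)
    set δ := ε / (2 * ‖q'‖) with hδ
    have hδpos : 0 < δ := by positivity
    have : (1 + δ) • q' ∈ Metric.ball q' ε := by
      rw [Metric.mem_ball]
      have : (1 + δ) • q' - q' = δ • q' := by module
      rw [dist_eq_norm, this, norm_smul]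
      rw [Real.norm_eq_abs, abs_of_pos hδpos]
      rw [hδ]
      rw [div_mul_eq_mul_div, mul_comm]
      rw [div_lt_iff₀ (by positivity)]
      nlinarith
    have hmem2 : (1 + δ) • q' ∈ B' := hball this
    exact hmin δ hδpos (by simpa [hB', hq'] using hmem2)
  -- separation
  obtain ⟨f, hf⟩ := geometric_hahn_banach_open_point hB'conv.interior isOpen_interior hq'nint
  have hf0 : (0:ℝ) < f q' := by simpa using hf 0 h0int
  have hfB : ∀ b ∈ B', f b ≤ f q' := by
    intro b hb
    by_contra hlt
    push_neg at hlt
    have hfb : 0 < f b := lt_trans hf0 hlt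
    set t := (f q' / f b + 1) / 2 with ht
    have ht0 : 0 < t := by positivity
    have htlt : t < 1 := by
      rw [ht]
      have : f q' / f b < 1 := (div_lt_one hfb).2 hlt
      linarith
    have htb : t • b ∈ interior B' := by
      have := hB'conv.openSegment_interior_self_subset_interior h0int hb
      apply this
      exact ⟨1 - t, t, by linarith, ht0, by ring, by simp⟩
    have := hf _ htb
    rw [map_smul] at this
    have hcontra : f q' < t * f b := by
      have h1 : t * f b = (f q' + f b) / 2 := by
        rw [ht]; field_simp
      rw [h1]; linarith
    rw [smul_eq_mul] at this
    linarith
  -- extend to W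
  obtain ⟨Vc, hcompl⟩ := Submodule.exists_isCompl V
  set π : W →ₗ[ℝ] V := V.linearProjOfIsCompl Vc hcompl with hπ
  refine ⟨(f q')⁻¹ • (f.toLinearMap.comp π), ?_, ?_⟩
  · have : π q = q' := Submodule.linearProjOfIsCompl_apply_left hcompl q'
    simp only [LinearMap.smul_apply, LinearMap.coe_comp, Function.comp_apply, hπ] at *
    rw [this]
    simp [inv_mul_cancel₀ (ne_of_gt hf0)]
  · intro p hp
    have hpV : p ∈ V := hBV hp
    have : π p = ⟨p, hpV⟩ := Submodule.linearProjOfIsCompl_apply_left hcompl ⟨p, hpV⟩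
    simp only [LinearMap.smul_apply, LinearMap.coe_comp, Function.comp_apply, hπ]
    rw [this]
    rw [smul_eq_mul, inv_mul_le_one₀ hf0]
    exact hfB _ (by simpa [hB'] using hp)

/-- for a state space `K` (embedded as the base `K × {1}` of the
cone `V(K)⁺` in `E × ℝ`) and `ψ ∈ V(K)`, the maximum of `⟨f, ψ⟩` over all effects
`f ∈ E(K)` equals `½(‖ψ‖_K + ⟨1_K, ψ⟩)`, where `‖·‖_K` is the base norm and the
linear action of an affine `f` on `ψ = (v, t)` is `f.linear v + t·f(0)`. -/
theorem stmt_8 {E : Type*} [NormedAddCommGroup E] [NormedSpace ℝ E] [FiniteDimensional ℝ E]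
    (K : Set E) (hK : Convex ℝ K) (hKc : IsCompact K) (hne : K.Nonempty)
    (ψ : E × ℝ)
    (hrep : ∃ a b : ℝ, 0 ≤ a ∧ 0 ≤ b ∧ ∃ x ∈ K, ∃ y ∈ K,
      ψ = a • ((x, 1) : E × ℝ) - b • ((y, 1) : E × ℝ)) :
    IsGreatest
      {r : ℝ | ∃ f : E →ᵃ[ℝ] ℝ, (∀ x ∈ K, 0 ≤ f x ∧ f x ≤ 1) ∧
        r = f.linear ψ.1 + ψ.2 * f 0}
      ((sInf {c : ℝ | ∃ a b : ℝ, 0 ≤ a ∧ 0 ≤ b ∧ c = a + b ∧ ∃ x ∈ K, ∃ y ∈ K,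
        ψ = a • ((x, 1) : E × ℝ) - b • ((y, 1) : E × ℝ)} + ψ.2) / 2) := by
  classical
  obtain ⟨a₀, b₀, ha₀, hb₀, x₀, hx₀, y₀, hy₀, hψ₀⟩ := hrep
  set S : Set ℝ := {c : ℝ | ∃ a b : ℝ, 0 ≤ a ∧ 0 ≤ b ∧ c = a + b ∧ ∃ x ∈ K, ∃ y ∈ K,
        ψ = a • ((x, 1) : E × ℝ) - b • ((y, 1) : E × ℝ)} with hSdef
  have hSne : S.Nonempty := ⟨a₀ + b₀, a₀, b₀, ha₀, hb₀, rfl, x₀, hx₀, y₀, hy₀, hψ₀⟩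
  have hSbdd : BddBelow S := by
    refine ⟨0, ?_⟩
    rintro c ⟨a, b, ha, hb, rfl, -⟩
    linarith
  -- value of an effect on a representation
  have hval : ∀ (f : E →ᵃ[ℝ] ℝ) (a b : ℝ) (x y : E),
      ψ = a • ((x, 1) : E × ℝ) - b • ((y, 1) : E × ℝ) →
      f.linear ψ.1 + ψ.2 * f 0 = a * f x - b * f y := by
    intro f a b x y h
    have h1 : ψ.1 = a • x - b • y := by rw [h]; rfl
    have h2 : ψ.2 = a - b := by rw [h]; simp
    have hfx : ∀ z : E, f z = f.linear z + f 0 := by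
      intro z
      conv_lhs => rw [f.decomp]
      simp
    rw [h1, h2, map_sub, map_smul, map_smul, hfx x, hfx y]
    simp only [smul_eq_mul]
    ring
  constructor
  · -- membership: the max is attained
    -- Step A: the infimum is attained, by compactness
    set C := a₀ + b₀ with hC
    set T : Set ((ℝ × ℝ) × E × E) :=
      ((Set.Icc (0:ℝ) C ×ˢ Set.Icc (0:ℝ) C) ×ˢ (K ×ˢ K)) ∩
        {p | ψ = p.1.1 • ((p.2.1, 1) : E × ℝ) - p.1.2 • ((p.2.2, 1) : E × ℝ)} with hT
    have hTne : T.Nonempty :=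
      ⟨((a₀, b₀), (x₀, y₀)), ⟨⟨⟨ha₀, by simp [hC]; linarith⟩, ⟨hb₀, by simp [hC]; linarith⟩⟩,
        hx₀, hy₀⟩, hψ₀⟩
    have hTcomp : IsCompact T := by
      apply IsCompact.inter_right
      · exact ((isCompact_Icc.prod isCompact_Icc).prod (hKc.prod hKc))
      · apply isClosed_eq continuous_const
        fun_prop
    obtain ⟨p, hpT, hpmin⟩ := hTcomp.exists_isMinOn hTne
      (by fun_prop : Continuous fun p : (ℝ × ℝ) × E × E => p.1.1 + p.1.2).continuousOn
    obtain ⟨⟨a, b⟩, x1, y1⟩ := p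
    obtain ⟨⟨⟨⟨ha, haC⟩, hb, hbC⟩, hx, hy⟩, hψp⟩ := hpT
    replace hψp : ψ = a • ((x1, 1) : E × ℝ) - b • ((y1, 1) : E × ℝ) := hψp
    replace hpmin : ∀ z ∈ T, a + b ≤ z.1.1 + z.1.2 := fun z hz => isMinOn_iff.1 hpmin z hz
    have hNmem : a + b ∈ S := ⟨a, b, ha, hb, rfl, x1, hx, y1, hy, hψp⟩
    have hNle : ∀ c ∈ S, a + b ≤ c := by
      rintro c ⟨a', b', ha', hb', rfl, x, hx', y, hy', hrep'⟩
      rcases le_or_gt (a' + b') C with hle | hlt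
      · have hmem : ((a', b'), (x, y)) ∈ T :=
          ⟨⟨⟨⟨ha', by linarith⟩, ⟨hb', by linarith⟩⟩, hx', hy'⟩, hrep'⟩
        exact hpmin _ hmem
      · have h0 : a + b ≤ a₀ + b₀ := hpmin ((a₀, b₀), (x₀, y₀))
          ⟨⟨⟨⟨ha₀, by simp [hC]; linarith⟩, ⟨hb₀, by simp [hC]; linarith⟩⟩, hx₀, hy₀⟩, hψ₀⟩
        rw [hC] at hlt
        linarith
    have hsInf : sInf S = a + b := le_antisymm (csInf_le hSbdd hNmem) (le_csInf hSne hNle)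
    set N := a + b with hNdef
    have hN0 : 0 ≤ N := by linarith
    rcases eq_or_lt_of_le hN0 with hNeq | hNpos
    · -- N = 0, so ψ = 0
      have ha0 : a = 0 := by linarith
      have hb0 : b = 0 := by linarith
      have hψ0 : ψ = 0 := by rw [hψp, ha0, hb0]; simp
      refine ⟨AffineMap.const ℝ E (0 : ℝ), fun x _ => ⟨le_refl _, zero_le_one⟩, ?_⟩
      rw [hsInf, ← hNeq, hψ0]
      simp
    · -- N > 0 : separation argument
      have hNne : N ≠ 0 := ne_of_gt hNpos
      set ι : E → E × ℝ := fun x => ((x, 1) : E × ℝ) with hι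
      set Khat : Set (E × ℝ) := ι '' K with hKhat
      have hKhatne : Khat.Nonempty := ⟨ι x₀, x₀, hx₀, rfl⟩
      have hKhatnegne : (-Khat).Nonempty := ⟨-ι x₀, Set.neg_mem_neg.2 ⟨x₀, hx₀, rfl⟩⟩
      set Bs : Set (E × ℝ) := convexHull ℝ (Khat ∪ -Khat) with hBs
      have hxhatB : ∀ x ∈ K, ι x ∈ Bs :=
        fun x hx' => subset_convexHull _ _ (Set.mem_union_left _ ⟨x, hx', rfl⟩)
      have hyhatB : ∀ y ∈ K, -ι y ∈ Bs := by
        intro y hy'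
        have hmem : ι y ∈ Khat := ⟨y, hy', rfl⟩
        exact subset_convexHull _ _ (Set.mem_union_right _ (Set.neg_mem_neg.2 hmem))
      -- convexity of Khat
      have hKhatconv : Convex ℝ Khat := by
        have : Khat = (AffineMap.mk' ι (LinearMap.inl ℝ E ℝ) 0
            (by intro p'; simp [hι, Prod.ext_iff])) '' K := rfl
        rw [this]
        exact hK.affine_image _
      -- decomposition of elements of Bs
      have hBdec : ∀ p' ∈ Bs, ∃ l m : ℝ, 0 ≤ l ∧ 0 ≤ m ∧ l + m = 1 ∧
          ∃ x ∈ K, ∃ y ∈ K, p' = l • ((x, 1) : E × ℝ) - m • ((y, 1) : E × ℝ) := by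
        intro p' hp'
        rw [hBs, convexHull_union hKhatne hKhatnegne,
          hKhatconv.convexHull_eq, convexHull_neg, hKhatconv.convexHull_eq,
          mem_convexJoin] at hp'
        obtain ⟨u, hu, v, hv, hseg⟩ := hp'
        obtain ⟨x, hx', rfl⟩ := hu
        obtain ⟨l, m, hl, hm, hlm, rfl⟩ := hseg
        rw [Set.mem_neg] at hv
        obtain ⟨y, hy', hyv⟩ := hv
        refine ⟨l, m, hl, hm, hlm, x, hx', y, hy', ?_⟩
        have hveq : v = -ι y := by rw [hyv]; simp
        rw [hveq]
        simp [hι, smul_neg, sub_eq_add_neg]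
      -- scaled membership gives membership in S
      have hscale : ∀ t : ℝ, 0 < t → ∀ p' ∈ Bs, ψ = t • p' → t ∈ S := by
        intro t ht pp hpp hψt
        obtain ⟨l, m, hl, hm, hlm, x, hx', y, hy', rfl⟩ := hBdec pp hpp
        refine ⟨t * l, t * m, by positivity, by positivity, by nlinarith, x, hx', y, hy', ?_⟩
        rw [hψt, smul_sub, smul_smul, smul_smul]
      set q : E × ℝ := N⁻¹ • ψ with hq
      have hψN : ψ = N • q := by
        rw [hq, smul_smul, mul_inv_cancel₀ hNne, one_smul]
      have hqB : q ∈ Bs := by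
        have hcomb : q = (N⁻¹ * a) • ι x1 + (N⁻¹ * b) • (-ι y1) := by
          rw [hq, hψp]
          simp only [hι]
          module
        have hsum : N⁻¹ * a + N⁻¹ * b = 1 := by
          rw [← mul_add, ← hNdef, inv_mul_cancel₀ hNne]
        have hy1mem : ι y1 ∈ Khat := ⟨y1, hy, rfl⟩
        have hseg := segment_subset_convexHull (𝕜 := ℝ) (Set.mem_union_left (-Khat) (show ι x1 ∈ Khat from ⟨x1, hx, rfl⟩))
          (Set.mem_union_right Khat (Set.neg_mem_neg.2 hy1mem))
        have hmemseg : q ∈ segment ℝ (ι x1) (-ι y1) :=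
          ⟨N⁻¹ * a, N⁻¹ * b, by positivity, by positivity, hsum, hcomb.symm⟩
        exact hseg hmemseg
      have hq0 : q ≠ 0 := by
        intro h
        have hψ0 : ψ = 0 := by rw [hψN, h, smul_zero]
        have h0S : (0:ℝ) ∈ S := ⟨0, 0, le_refl _, le_refl _, by ring, x₀, hx₀, y₀, hy₀, by
          rw [hψ0]; simp⟩
        have := csInf_le hSbdd h0S
        rw [hsInf] at this
        linarith
      have hsym : ∀ p' ∈ Bs, -p' ∈ Bs := by
        intro p' hp'
        obtain ⟨l, m, hl, hm, hlm, x, hx', y, hy', rfl⟩ := hBdec p' hp'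
        have hcomb : -(l • ((x, 1):E×ℝ) - m • ((y, 1):E×ℝ)) = m • ι y + l • (-ι x) := by
          simp only [hι]; module
        rw [hcomb]
        have hxmem : ι x ∈ Khat := ⟨x, hx', rfl⟩
        have hmemseg : m • ι y + l • (-ι x) ∈ segment ℝ (ι y) (-ι x) :=
          ⟨m, l, hm, hl, by linarith, rfl⟩
        exact segment_subset_convexHull (Set.mem_union_left (-Khat) (show ι y ∈ Khat from ⟨y, hy', rfl⟩))
          (Set.mem_union_right Khat (Set.neg_mem_neg.2 hxmem)) hmemseg
      have hmin : ∀ δ : ℝ, 0 < δ → (1 + δ) • q ∉ Bs := by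
        intro δ hδ hmem
        have hψt : ψ = (N / (1 + δ)) • ((1 + δ) • q) := by
          rw [smul_smul, div_mul_cancel₀ _ (by positivity : (1:ℝ) + δ ≠ 0), ← hψN]
        have htS : N / (1 + δ) ∈ S := hscale _ (by positivity) _ hmem hψt
        have h1 := csInf_le hSbdd htS
        rw [hsInf] at h1
        have h2 : N / (1 + δ) < N := div_lt_self hNpos (by linarith)
        linarith
      obtain ⟨g, hgq, hgB⟩ := support_functional Bs (convex_convexHull ℝ _) hsym q hqB hq0 hmin
      -- build the effect
      refine ⟨{ toFun := fun x => 2⁻¹ * (g ((x, 1) : E × ℝ) + 1)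
                linear := (2⁻¹ : ℝ) • (g.comp (LinearMap.inl ℝ E ℝ))
                map_vadd' := by
                  intro p' v
                  have hdec : ((v + p' : E), (1:ℝ)) = ((v, 0) : E × ℝ) + (p', 1) := by simp
                  show 2⁻¹ * (g ((v + p' : E), (1:ℝ)) + 1) =
                    ((2⁻¹ : ℝ) • (g.comp (LinearMap.inl ℝ E ℝ))) v + 2⁻¹ * (g (p', 1) + 1)
                  rw [hdec, map_add]
                  simp only [LinearMap.smul_apply, LinearMap.coe_comp, Function.comp_apply,
                    LinearMap.coe_inl, smul_eq_mul]
                  ring }, ?_, ?_⟩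
      · intro x hx'
        have hg2 : g ((x, 1) : E × ℝ) ≤ 1 := hgB _ (hxhatB x hx')
        have hg1' : g (-((x, 1) : E × ℝ)) ≤ 1 := hgB _ (hyhatB x hx')
        rw [map_neg] at hg1'
        show 0 ≤ 2⁻¹ * (g ((x, 1) : E × ℝ) + 1) ∧ 2⁻¹ * (g ((x, 1) : E × ℝ) + 1) ≤ 1
        constructor <;> linarith
      · -- the value equals (N + ψ.2)/2
        have hgψ : g ψ = N := by
          rw [hψN, map_smul, hgq]
          simp
        have hsplit : g ((ψ.1, 0) : E × ℝ) + ψ.2 * g (((0 : E), (1:ℝ)) : E × ℝ) = N := by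
          have h1 : ((ψ.1, 0) : E × ℝ) + ψ.2 • (((0 : E), (1:ℝ)) : E × ℝ) = ψ := by
            ext <;> simp
          rw [← hgψ]
          conv_rhs => rw [← h1]
          rw [map_add, map_smul, smul_eq_mul]
        show (sInf S + ψ.2) / 2 =
          ((2⁻¹ : ℝ) • (g.comp (LinearMap.inl ℝ E ℝ))) ψ.1 + ψ.2 * (2⁻¹ * (g (((0:E), (1:ℝ)) : E × ℝ) + 1))
        simp only [LinearMap.smul_apply, LinearMap.coe_comp, Function.comp_apply,
          LinearMap.coe_inl, smul_eq_mul]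
        rw [hsInf]
        linear_combination (-1/2 : ℝ) * hsplit
  · -- upper bound
    rintro r ⟨f, hf, rfl⟩
    have h2 : ∀ c ∈ S, 2 * (f.linear ψ.1 + ψ.2 * f 0) - ψ.2 ≤ c := by
      rintro c ⟨a, b, ha, hb, rfl, x, hx, y, hy, hrepc⟩
      have hv := hval f a b x y hrepc
      have hψ2 : ψ.2 = a - b := by rw [hrepc]; simp
      obtain ⟨hfx0, hfx1⟩ := hf x hx
      obtain ⟨hfy0, hfy1⟩ := hf y hy
      rw [hv, hψ2]
      nlinarith
    have := le_csInf hSne h2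
    linarith
end

section
/- Let K be a compact convex set and f^0,...,f^k measurements on K with f^i : K → Δ_{l_i}. Then for any s = (p^0,...,p^k) in the polysimplex S and λ = k/(k+1), the collection (1−λ)f^i + λ·f_{p^i}, i = 0,...,k, is compatible (admits a joint measurement). Hence the incompatibility degree ID_s(F) is at most k/(k+1). -/
def IsAffineOn {E V : Type*} [AddCommGroup E] [Module ℝ E] [AddCommGroup V] [Module ℝ V]
    (C : Set E) (f : E → V) : Prop :=
  ∀ x ∈ C, ∀ y ∈ C, ∀ a b : ℝ, 0 ≤ a → 0 ≤ b → a + b = 1 →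
    f (a • x + b • y) = a • f x + b • f y

/-- The collection `((1−λ)f^i + λ·f_{p^i})_i` is compatible: it admits a joint
measurement `g : K → Δ(Π_i {0,…,l_i})` whose `i`-th marginal is
`(1−λ)f^i + λ·p^i`. -/
def NoisyCompatible {E : Type*} [AddCommGroup E] [Module ℝ E] (K : Set E)
    (k : ℕ) (l : Fin (k + 1) → ℕ)
    (f : Π i : Fin (k + 1), E → (Fin (l i + 1) → ℝ))
    (p : Π i : Fin (k + 1), Fin (l i + 1) → ℝ) (lam : ℝ) : Prop :=
  ∃ g : E → ((Π i : Fin (k + 1), Fin (l i + 1)) → ℝ),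
    IsAffineOn K g ∧
    (∀ x ∈ K, g x ∈ stdSimplex ℝ (Π i : Fin (k + 1), Fin (l i + 1))) ∧
    (∀ x ∈ K, ∀ i : Fin (k + 1), ∀ j : Fin (l i + 1),
      (∑ n : Π i' : Fin (k + 1), Fin (l i' + 1), if n i = j then g x n else 0) =
        (1 - lam) * f i x j + lam * p i j)

open Finset

section Aux

variable {k : ℕ} {l : Fin (k + 1) → ℕ}

lemma sum_pi_prod (h : Π i : Fin (k + 1), Fin (l i + 1) → ℝ) :
    (∑ n : Π i : Fin (k + 1), Fin (l i + 1), ∏ i, h i (n i)) = ∏ i, ∑ m, h i m :=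
  (Fintype.prod_sum h).symm

lemma sum_pi_prod_fiber (h : Π i : Fin (k + 1), Fin (l i + 1) → ℝ) (i0 : Fin (k + 1))
    (j : Fin (l i0 + 1)) :
    (∑ n : Π i : Fin (k + 1), Fin (l i + 1), if n i0 = j then ∏ i, h i (n i) else 0)
      = h i0 j * ∏ i ∈ univ.erase i0, ∑ m, h i m := by
  have key : ∀ n : Π i : Fin (k + 1), Fin (l i + 1),
      (if n i0 = j then ∏ i, h i (n i) else 0)
        = ∏ i, Function.update h i0 (fun m => if m = j then h i0 m else 0) i (n i) := by
    intro n
    by_cases hnj : n i0 = j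
    · rw [if_pos hnj]
      refine Finset.prod_congr rfl fun i _ => ?_
      rcases eq_or_ne i i0 with rfl | hne
      · simp [Function.update_self, hnj]
      · simp [Function.update_of_ne hne]
    · rw [if_neg hnj]
      symm
      apply Finset.prod_eq_zero (Finset.mem_univ i0)
      simp [Function.update_self, hnj]
  simp_rw [key]
  rw [sum_pi_prod, ← Finset.mul_prod_erase _ _ (Finset.mem_univ i0)]
  congr 1
  · simp [Function.update_self]
  · refine Finset.prod_congr rfl fun i hi => ?_
    rw [Function.update_of_ne (Finset.ne_of_mem_erase hi)]

lemma prod_ite_eq_mul_erase (F P : Π i : Fin (k + 1), Fin (l i + 1) → ℝ) (i : Fin (k + 1))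
    (n : Π i' : Fin (k + 1), Fin (l i' + 1)) :
    (∏ i', if i' = i then F i' (n i') else P i' (n i'))
      = F i (n i) * ∏ i' ∈ univ.erase i, P i' (n i') := by
  rw [← Finset.mul_prod_erase _ (fun i' => if i' = i then F i' (n i') else P i' (n i'))
    (Finset.mem_univ i)]
  simp only [if_pos rfl]
  congr 1
  exact Finset.prod_congr rfl fun i' hi' => if_neg (Finset.ne_of_mem_erase hi')

end Aux

/-- for any measurements `f^0,…,f^k` on `K` and any coin-toss noise
`s = (p^0,…,p^k)`, the collection `((1−λ)f^i + λ f_{p^i})_i` with `λ = k/(k+1)`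
admits a joint measurement; hence `ID_s(F) ≤ k/(k+1)`. -/
theorem stmt_10 {E : Type*} [AddCommGroup E] [Module ℝ E]
    (K : Set E) (hK : Convex ℝ K) (k : ℕ) (l : Fin (k + 1) → ℕ)
    (f : Π i : Fin (k + 1), E → (Fin (l i + 1) → ℝ))
    (hf : ∀ i, IsAffineOn K (f i))
    (hfS : ∀ i, ∀ x ∈ K, f i x ∈ stdSimplex ℝ (Fin (l i + 1)))
    (p : Π i : Fin (k + 1), Fin (l i + 1) → ℝ)
    (hp : ∀ i, p i ∈ stdSimplex ℝ (Fin (l i + 1))) :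
    NoisyCompatible K k l f p ((k : ℝ) / (k + 1)) ∧
    sInf {lam : ℝ | lam ∈ Set.Icc (0 : ℝ) 1 ∧ NoisyCompatible K k l f p lam} ≤
      (k : ℝ) / (k + 1) := by
  have hc : ((k : ℝ) + 1) ≠ 0 := by positivity
  have hcomp : NoisyCompatible K k l f p ((k : ℝ) / (k + 1)) := by
    refine ⟨fun x n => ((k : ℝ) + 1)⁻¹ *
      ∑ i, ∏ i', (if i' = i then f i' x (n i') else p i' (n i')), ?_, ?_, ?_⟩
    · -- affinity
      intro x hx y hy a b ha hb hab
      funext n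
      simp only [Pi.add_apply, Pi.smul_apply, smul_eq_mul]
      simp_rw [prod_ite_eq_mul_erase]
      have hfab : ∀ i : Fin (k + 1),
          f i (a • x + b • y) (n i) = a * f i x (n i) + b * f i y (n i) := by
        intro i
        rw [hf i x hx y hy a b ha hb hab]
        simp
      simp_rw [hfab]
      simp only [Finset.mul_sum]
      rw [← Finset.sum_add_distrib]
      refine Finset.sum_congr rfl fun i _ => ?_
      ring
    · -- simplex membership
      intro x hx
      constructor
      · intro n
        have h0 : 0 ≤ ∑ i, ∏ i', (if i' = i then f i' x (n i') else p i' (n i')) := by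
          refine Finset.sum_nonneg fun i _ => Finset.prod_nonneg fun i' _ => ?_
          split_ifs
          · exact (hfS i' x hx).1 _
          · exact (hp i').1 _
        positivity
      · rw [← Finset.mul_sum, Finset.sum_comm]
        have h1 : ∀ i : Fin (k + 1),
            (∑ n : Π i' : Fin (k + 1), Fin (l i' + 1),
              ∏ i', (if i' = i then f i' x (n i') else p i' (n i'))) = 1 := by
          intro i
          rw [sum_pi_prod (fun i' m => if i' = i then f i' x m else p i' m)]
          refine Finset.prod_eq_one fun i' _ => ?_
          by_cases h : i' = i
          · subst h; simp [(hfS i' x hx).2]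
          · simp [h, (hp i').2]
        simp_rw [h1]
        simp only [Finset.sum_const, Finset.card_univ, Fintype.card_fin, nsmul_eq_mul,
          mul_one, Nat.cast_add, Nat.cast_one]
        exact inv_mul_cancel₀ hc
    · -- marginals
      intro x hx i0 j
      have hite : ∀ n : Π i' : Fin (k + 1), Fin (l i' + 1),
          (if n i0 = j then ((k : ℝ) + 1)⁻¹ *
              ∑ i, ∏ i', (if i' = i then f i' x (n i') else p i' (n i')) else 0)
            = ((k : ℝ) + 1)⁻¹ * ∑ i,
              (if n i0 = j then ∏ i', (if i' = i then f i' x (n i') else p i' (n i')) else 0) := by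
        intro n
        by_cases h : n i0 = j <;> simp [h]
      simp_rw [hite]
      rw [← Finset.mul_sum, Finset.sum_comm]
      have hin : ∀ i : Fin (k + 1),
          (∑ n : Π i' : Fin (k + 1), Fin (l i' + 1),
            if n i0 = j then ∏ i', (if i' = i then f i' x (n i') else p i' (n i')) else 0)
            = if i0 = i then f i0 x j else p i0 j := by
        intro i
        rw [sum_pi_prod_fiber (fun i' m => if i' = i then f i' x m else p i' m) i0 j]
        have h1 : (∏ i' ∈ univ.erase i0, ∑ m, (if i' = i then f i' x m else p i' m)) = 1 := by
          refine Finset.prod_eq_one fun i' _ => ?_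
          by_cases h : i' = i
          · subst h; simp [(hfS i' x hx).2]
          · simp [h, (hp i').2]
        rw [h1, mul_one]
      simp_rw [hin]
      rw [← Finset.add_sum_erase _ _ (Finset.mem_univ i0), if_pos rfl]
      have h2 : ∑ i ∈ univ.erase i0, (if i0 = i then f i0 x j else p i0 j)
          = (k : ℝ) * p i0 j := by
        rw [Finset.sum_congr rfl fun i hi => if_neg (Finset.ne_of_mem_erase hi).symm,
          Finset.sum_const, Finset.card_erase_of_mem (Finset.mem_univ i0),
          Finset.card_univ, Fintype.card_fin]
        simp [nsmul_eq_mul]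
      rw [h2]
      field_simp
      try ring
  refine ⟨hcomp, csInf_le ⟨0, fun y hy => hy.1.1⟩ ⟨⟨by positivity, ?_⟩, hcomp⟩⟩
  rw [div_le_one (by positivity)]
  linarith [Nat.cast_nonneg (α := ℝ) k]
end

section
/- Let K be a compact convex set, S a polysimplex, F : K → S affine, and for s ∈ S let F_s denote the constant map with value s. Define ID_s(F) = min{λ ∈ [0,1] : (1−λ)F + λF_s is entanglement breaking}. Then inf over all s ∈ S of ID_s(F) equals the inf over s in the relative interior of S: ID(F) = inf_{s ∈ ri(S)} ID_s(F). Specifically, if s_0 ∈ ∂S, s_1 ∈ ri(S) and s_t = t s_1 + (1−t) s_0, then ID_{s_t}(F) ≤ ID_{s_0}(F)/(1 − t(1 − ID_{s_0}(F))), which tends to ID_{s_0}(F) as t → 0. -/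
abbrev PolyAmb (k : ℕ) (l : Fin (k + 1) → ℕ) := Π i : Fin (k + 1), Fin (l i + 1) → ℝ

def Spoly (k : ℕ) (l : Fin (k + 1) → ℕ) : Set (PolyAmb k l) :=
  Set.univ.pi fun i => stdSimplex ℝ (Fin (l i + 1))

/-- The cone `V(K)⁺ = ∪_{c ≥ 0} c•K` generated by a base `K`. -/
def coneOf {E : Type*} [AddCommGroup E] [Module ℝ E] (K : Set E) : Set E :=
  {v | ∃ c : ℝ, 0 ≤ c ∧ ∃ x ∈ K, v = c • x}

/-- `T` is entanglement breaking on `C` (with target cone `P`): it is a finite sum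
`T = Σ_j f_j(·) φ_j` with `f_j` nonnegative affine functions on `C` and `φ_j ∈ P`. -/
def ETBOn {E V : Type*} [AddCommGroup E] [Module ℝ E] [AddCommGroup V] [Module ℝ V]
    (C : Set E) (P : Set V) (T : E → V) : Prop :=
  ∃ (n : ℕ) (f : Fin n → E → ℝ) (φ : Fin n → V),
    (∀ j, IsAffineOn C (f j)) ∧ (∀ j, ∀ x ∈ C, 0 ≤ f j x) ∧ (∀ j, φ j ∈ P) ∧
    ∀ x ∈ C, T x = ∑ j, f j x • φ j

/-- The incompatibility degree `ID_s(F)`: the least `λ ∈ [0,1]` such that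
`(1−λ)F + λF_s` is entanglement breaking. -/
noncomputable def IDs {E : Type*} [AddCommGroup E] [Module ℝ E]
    (k : ℕ) (l : Fin (k + 1) → ℕ) (K : Set E) (F : E → PolyAmb k l)
    (s : PolyAmb k l) : ℝ :=
  sInf {lam : ℝ | lam ∈ Set.Icc (0 : ℝ) 1 ∧
    ETBOn K (coneOf (Spoly k l)) (fun x => (1 - lam) • F x + lam • s)}

/-!
Write `s_t = β s_0 + (1 - β) s'` with `s' ∈ S`, which is possible because `s_1 ∈ ri S` lets the
segment from `s_0` through `s_1` be prolonged inside `S` (so `β = 1 - t b` with `b < 1`, and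
`β > 0` even for `t = 1`). If `(1 - λ)F + λF_{s_0}` is ETB, then for
`μ = λ / (λ + β(1 - λ))` the map `(1 - μ)F + μF_{s_t}` is a positive multiple of it plus a
constant map, hence ETB. Passing to the infimum over `λ` (the bound is continuous in `λ`) and
using `β ≥ 1 - t` gives the quantitative estimate; letting `t → 0` gives equality of the two
infima.
-/

open Set Filter Topology

section IntrinsicInterior
variable {V : Type*} [AddCommGroup V] [Module ℝ V] [TopologicalSpace V]
  [IsTopologicalAddGroup V] [ContinuousSMul ℝ V]

lemma exists_mem_openSegment_of_mem_intrinsicInterior {s : Set V} {x y : V}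
    (hx : x ∈ intrinsicInterior ℝ s) (hy : y ∈ s) : ∃ z ∈ s, x ∈ openSegment ℝ y z := by
  rw [mem_intrinsicInterior] at hx
  obtain ⟨x, hx, rfl⟩ := hx
  have hyA := subset_affineSpan ℝ s hy
  let ray : ℝ → affineSpan ℝ s :=
    fun c => ⟨c • ((x : V) - y) + y, (affineSpan ℝ s).smul_vsub_vadd_mem c x.2 hyA hyA⟩
  have hray : Continuous ray := by fun_prop
  have hray1 : ray 1 = x := by ext; simp [ray]
  rw [← hray1, mem_interior_iff_mem_nhds] at hx
  have hev : ∀ᶠ c in 𝓝 1, (ray c : V) ∈ s := hray.continuousAt.preimage_mem_nhds hx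
  obtain ⟨c, hc, hc1⟩ := ((hev.filter_mono nhdsWithin_le_nhds).and
    (self_mem_nhdsWithin : Ioi (1 : ℝ) ∈ 𝓝[>] 1)).exists
  have hc0 : 0 < c := zero_lt_one.trans hc1
  refine ⟨ray c, hc, 1 - c⁻¹, c⁻¹, sub_pos.2 (inv_lt_one_of_one_lt₀ hc1), inv_pos.2 hc0,
    sub_add_cancel 1 c⁻¹, ?_⟩
  simp only [ray]
  match_scalars <;> field_simp; ring

lemma Convex.combo_mem_intrinsicInterior {s : Set V} (hs : Convex ℝ s) {x y : V}
    (hx : x ∈ intrinsicInterior ℝ s) (hy : y ∈ s) {t : ℝ} (ht : 0 < t) (ht1 : t ≤ 1) :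
    t • x + (1 - t) • y ∈ intrinsicInterior ℝ s := by
  rw [mem_intrinsicInterior] at hx ⊢
  obtain ⟨x, hx, rfl⟩ := hx
  have hyA := subset_affineSpan ℝ s hy
  -- `w` is the image of `x` under the homothety of ratio `t` centred at `y`; `dilate` undoes it.
  let w : affineSpan ℝ s :=
    ⟨t • ((x : V) - y) + y, (affineSpan ℝ s).smul_vsub_vadd_mem t x.2 hyA hyA⟩
  let dilate : affineSpan ℝ s → affineSpan ℝ s :=
    fun z => ⟨t⁻¹ • ((z : V) - y) + y, (affineSpan ℝ s).smul_vsub_vadd_mem t⁻¹ z.2 hyA hyA⟩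
  have hdilate : Continuous dilate := by fun_prop
  have hw : dilate w = x := by ext; simp [dilate, w, ht.ne']
  rw [← hw, mem_interior_iff_mem_nhds] at hx
  refine ⟨w, mem_interior_iff_mem_nhds.2 ?_, by simp only [w]; module⟩
  refine mem_of_superset (hdilate.continuousAt.preimage_mem_nhds hx) ?_
  intro z hz
  have : t • (dilate z : V) + (1 - t) • y = z := by simp [dilate, ht.ne']; module
  simpa [this] using hs hz hy ht.le (sub_nonneg.2 ht1) (add_sub_cancel t 1)

end IntrinsicInterior

lemma smul_mem_coneOf {E : Type*} [AddCommGroup E] [Module ℝ E] {K : Set E} {c : ℝ} (hc : 0 ≤ c)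
    {x : E} (hx : x ∈ K) : c • x ∈ coneOf K :=
  ⟨c, hc, x, hx, rfl⟩

namespace ETBOn
variable {E V : Type*} [AddCommGroup E] [Module ℝ E] [AddCommGroup V] [Module ℝ V]
  {C : Set E} {P : Set V} {T : E → V}

lemma zero : ETBOn C P (0 : E → V) :=
  ⟨0, Fin.elim0, Fin.elim0, fun j => j.elim0, fun j => j.elim0, fun j => j.elim0,
    fun _ _ => by simp⟩

lemma congr {T' : E → V} (h : ETBOn C P T) (hT : ∀ x ∈ C, T x = T' x) : ETBOn C P T' := by
  obtain ⟨n, f, φ, haff, hpos, hφ, hsum⟩ := h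
  exact ⟨n, f, φ, haff, hpos, hφ, fun x hx => (hT x hx).symm.trans (hsum x hx)⟩

lemma smul (h : ETBOn C P T) {c : ℝ} (hc : 0 ≤ c) : ETBOn C P (c • T) := by
  obtain ⟨n, f, φ, haff, hpos, hφ, hsum⟩ := h
  refine ⟨n, fun j x => c * f j x, φ, fun j x hx y hy a b ha hb hab => ?_,
    fun j x hx => mul_nonneg hc (hpos j x hx), hφ, fun x hx => ?_⟩
  · simp only [haff j x hx y hy a b ha hb hab, smul_eq_mul]
    ring
  · simp only [Pi.smul_apply, hsum x hx, Finset.smul_sum, mul_smul]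

lemma add_const (h : ETBOn C P T) {p : V} (hp : p ∈ P) : ETBOn C P (fun x => T x + p) := by
  obtain ⟨n, f, φ, haff, hpos, hφ, hsum⟩ := h
  refine ⟨n + 1, Fin.snoc f (fun _ => 1), Fin.snoc φ p, fun j => ?_, fun j => ?_, fun j => ?_,
    fun x hx => ?_⟩
  · refine Fin.lastCases ?_ (fun j => ?_) j
    · intro x _ y _ a b _ _ hab
      simp [hab]
    · simpa using haff j
  · refine Fin.lastCases ?_ (fun j => ?_) j
    · simp
    · simpa using hpos j
  · refine Fin.lastCases ?_ (fun j => ?_) j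
    · simpa using hp
    · simpa using hφ j
  · simp [Fin.sum_univ_castSucc, hsum x hx]

end ETBOn

lemma convex_Spoly (k : ℕ) (l : Fin (k + 1) → ℕ) : Convex ℝ (Spoly k l) :=
  convex_pi fun _ _ => convex_stdSimplex ℝ _

lemma Spoly_nonempty (k : ℕ) (l : Fin (k + 1) → ℕ) : (Spoly k l).Nonempty :=
  univ_pi_nonempty_iff.2 fun _ => nonempty_coe_sort.1 inferInstance

def etbMixingSet {E : Type*} [AddCommGroup E] [Module ℝ E]
    (k : ℕ) (l : Fin (k + 1) → ℕ) (K : Set E) (F : E → PolyAmb k l) (s : PolyAmb k l) :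
    Set ℝ :=
  {lam : ℝ | lam ∈ Icc (0 : ℝ) 1 ∧
    ETBOn K (coneOf (Spoly k l)) (fun x => (1 - lam) • F x + lam • s)}

section IncompatibilityDegree
variable {E : Type*} [AddCommGroup E] [Module ℝ E] {k : ℕ} {l : Fin (k + 1) → ℕ} {K : Set E}
  {F : E → PolyAmb k l} {s s' : PolyAmb k l}

lemma bddBelow_etbMixingSet : BddBelow (etbMixingSet k l K F s) :=
  ⟨0, fun _ hlam => hlam.1.1⟩

lemma one_mem_etbMixingSet (hs : s ∈ Spoly k l) : (1 : ℝ) ∈ etbMixingSet k l K F s :=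
  ⟨right_mem_Icc.2 zero_le_one,
    (ETBOn.zero.add_const (smul_mem_coneOf zero_le_one hs)).congr fun x _ => by simp⟩

lemma IDs_nonneg : 0 ≤ IDs k l K F s :=
  Real.sInf_nonneg fun _ hlam => hlam.1.1

lemma bddBelow_IDs_image (A : Set (PolyAmb k l)) : BddBelow (IDs k l K F '' A) :=
  ⟨0, forall_mem_image.2 fun _ _ => IDs_nonneg⟩

lemma IDs_le_one (hs : s ∈ Spoly k l) : IDs k l K F s ≤ 1 :=
  csInf_le bddBelow_etbMixingSet (one_mem_etbMixingSet hs)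

/-- With `D = λ + β (1 - λ)`: `(1 - μ) F + μ (β s + (1 - β) s')` equals
`(β / D) ((1 - λ) F + λ s) + (λ (1 - β) / D) s'`. -/
lemma div_mem_etbMixingSet_smul_add_smul (hs' : s' ∈ Spoly k l) {β lam : ℝ} (hβ : 0 < β)
    (hβ1 : β ≤ 1) (hlam : lam ∈ etbMixingSet k l K F s) :
    lam / (lam + β * (1 - lam)) ∈ etbMixingSet k l K F (β • s + (1 - β) • s') := by
  obtain ⟨⟨hlam0, hlam1⟩, hETB⟩ := hlam
  have hD : β ≤ lam + β * (1 - lam) := by nlinarith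
  have hD0 : 0 < lam + β * (1 - lam) := hβ.trans_le hD
  refine ⟨⟨div_nonneg hlam0 hD0.le, (div_le_one hD0).2 (by nlinarith)⟩, ?_⟩
  refine ((hETB.smul (div_nonneg hβ.le hD0.le)).add_const
    (smul_mem_coneOf (div_nonneg (mul_nonneg hlam0 (sub_nonneg.2 hβ1)) hD0.le) hs')).congr
    fun x _ => ?_
  simp only [Pi.smul_apply]
  match_scalars <;> field_simp
  ring

lemma IDs_smul_add_one_sub_smul_le (hs : s ∈ Spoly k l) (hs' : s' ∈ Spoly k l) {β : ℝ} (hβ : 0 < β)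
    (hβ1 : β ≤ 1) :
    IDs k l K F (β • s + (1 - β) • s') ≤
      IDs k l K F s / (IDs k l K F s + β * (1 - IDs k l K F s)) := by
  have hden : IDs k l K F s + β * (1 - IDs k l K F s) ≠ 0 := by
    nlinarith [IDs_nonneg (K := K) (F := F) (s := s)]
  -- the bound holds at every feasible `λ`, and `ID_s(F)` lies in the closure of the feasible set
  refine ContinuousWithinAt.closure_le
    (csInf_mem_closure ⟨1, one_mem_etbMixingSet hs⟩ bddBelow_etbMixingSet)
    continuousWithinAt_const ((by fun_prop (disch := exact hden) :
      ContinuousAt (fun lam : ℝ => lam / (lam + β * (1 - lam))) _).continuousWithinAt)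
    fun lam hlam => csInf_le bddBelow_etbMixingSet
      (div_mem_etbMixingSet_smul_add_smul hs' hβ hβ1 hlam)

lemma IDs_combo_intrinsicInterior_le (hs0 : s ∈ Spoly k l)
    (hs1 : s' ∈ intrinsicInterior ℝ (Spoly k l)) {t : ℝ} (ht : 0 < t) (ht1 : t ≤ 1) :
    IDs k l K F (t • s' + (1 - t) • s) ≤ IDs k l K F s / (1 - t * (1 - IDs k l K F s)) := by
  obtain ⟨z, hz, a, b, ha, hb, hab, rfl⟩ :=
    exists_mem_openSegment_of_mem_intrinsicInterior hs1 hs0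
  have hβ : 0 < 1 - t * b := by nlinarith
  have hcombo : t • (a • s + b • z) + (1 - t) • s = (1 - t * b) • s + (1 - (1 - t * b)) • z := by
    rw [eq_sub_of_add_eq hab]; module
  rw [hcombo]
  refine (IDs_smul_add_one_sub_smul_le hs0 hz hβ (by nlinarith)).trans ?_
  have h0 := IDs_nonneg (K := K) (F := F) (s := s)
  have h1 := IDs_le_one (K := K) (F := F) hs0
  rcases (show 0 ≤ 1 - t * (1 - IDs k l K F s) by nlinarith).eq_or_lt with hD | hD
  · have : IDs k l K F s = 0 := by nlinarith
    simp [this]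
  · have hb1 : b ≤ 1 := by linarith
    exact div_le_div_of_nonneg_left h0 hD
      (by nlinarith [mul_nonneg (mul_nonneg ht.le (sub_nonneg.2 hb1)) (sub_nonneg.2 h1)])

lemma sInf_IDs_intrinsicInterior_le (hs : s ∈ Spoly k l) :
    sInf (IDs k l K F '' intrinsicInterior ℝ (Spoly k l)) ≤ IDs k l K F s := by
  obtain ⟨s', hs'⟩ := (Spoly_nonempty k l).intrinsicInterior (convex_Spoly k l)
  have hlim : Tendsto (fun t : ℝ => IDs k l K F s / (1 - t * (1 - IDs k l K F s))) (𝓝[>] 0)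
      (𝓝 (IDs k l K F s)) := by
    have : ContinuousAt (fun t : ℝ => IDs k l K F s / (1 - t * (1 - IDs k l K F s))) 0 := by
      fun_prop (disch := simp)
    simpa using this.tendsto.mono_left nhdsWithin_le_nhds
  refine ge_of_tendsto hlim ?_
  filter_upwards [Ioc_mem_nhdsGT zero_lt_one] with t ht
  exact (csInf_le (bddBelow_IDs_image _)
    (mem_image_of_mem _ ((convex_Spoly k l).combo_mem_intrinsicInterior hs' hs ht.1 ht.2))).trans
    (IDs_combo_intrinsicInterior_le hs hs' ht.1 ht.2)

end IncompatibilityDegree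

theorem stmt_11_general {E : Type*} [AddCommGroup E] [Module ℝ E]
    (k : ℕ) (l : Fin (k + 1) → ℕ) (K : Set E)
    (F : E → PolyAmb k l) :
    sInf ((fun s => IDs k l K F s) '' Spoly k l) =
      sInf ((fun s => IDs k l K F s) '' intrinsicInterior ℝ (Spoly k l)) ∧
    ∀ s0 ∈ Spoly k l, ∀ s1 ∈ intrinsicInterior ℝ (Spoly k l), ∀ t : ℝ, 0 < t → t ≤ 1 →
      IDs k l K F (t • s1 + (1 - t) • s0) ≤
        IDs k l K F s0 / (1 - t * (1 - IDs k l K F s0)) := by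
  refine ⟨le_antisymm ?_ ?_, fun _ hs0 _ hs1 _ ht ht1 =>
    IDs_combo_intrinsicInterior_le hs0 hs1 ht ht1⟩
  · obtain ⟨s, hs⟩ := (Spoly_nonempty k l).intrinsicInterior (convex_Spoly k l)
    exact csInf_le_csInf (bddBelow_IDs_image _) ⟨_, mem_image_of_mem _ hs⟩
      (image_mono intrinsicInterior_subset)
  · exact le_csInf ((Spoly_nonempty k l).image _)
      (forall_mem_image.2 fun _ hs => sInf_IDs_intrinsicInterior_le hs)

/-- `ID(F) = inf_{s ∈ ri S} ID_s(F)`; specifically, for `s_0 ∈ S`,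
`s_1 ∈ ri S` and `s_t = t s_1 + (1−t) s_0` with `0 < t ≤ 1`,
`ID_{s_t}(F) ≤ ID_{s_0}(F) / (1 − t(1 − ID_{s_0}(F)))`. -/
theorem stmt_11 {E : Type*} [AddCommGroup E] [Module ℝ E]
    (k : ℕ) (l : Fin (k + 1) → ℕ) (K : Set E) (hK : Convex ℝ K)
    (F : E → PolyAmb k l) (hF : IsAffineOn K F)
    (hFS : ∀ x ∈ K, F x ∈ Spoly k l) :
    sInf ((fun s => IDs k l K F s) '' Spoly k l) =
      sInf ((fun s => IDs k l K F s) '' intrinsicInterior ℝ (Spoly k l)) ∧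
    ∀ s0 ∈ Spoly k l, ∀ s1 ∈ intrinsicInterior ℝ (Spoly k l), ∀ t : ℝ, 0 < t → t ≤ 1 →
      IDs k l K F (t • s1 + (1 - t) • s0) ≤
        IDs k l K F s0 / (1 - t * (1 - IDs k l K F s0)) :=
  stmt_11_general k l K F
end

section
/- Let S = Δ_{l_0} × ⋯ × Δ_{l_k} be a polysimplex and V a real vector space with a convex cone V⁺. A family of elements w_{n_0,...,n_k} ∈ V⁺ (n_i = 0,...,l_i) arises as the set of vertex images W(s_{n_0,...,n_k}) of some affine map W : S → V⁺ if and only if for all index tuples (n_0,...,n_k), (n_0',...,n_k') and all i: w_{n_0,...,n_k} + w_{n_0',...,n_k'} = w_{n_0,...,n_{i-1},n_i',n_{i+1},...,n_k} + w_{n_0',...,n_{i-1}',n_i,n_{i+1}',...,n_k'}. -/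
def vert (k : ℕ) (l : Fin (k + 1) → ℕ) (n : Π i : Fin (k + 1), Fin (l i + 1)) :
    PolyAmb k l := fun i => Pi.single (n i) 1

/-!
The exchange relations are necessary because `s_n + s_{n'}` and the sum of the two exchanged
vertices coincide, so their midpoints do, and an affine map sees only the midpoint. Conversely,
repeated exchange with the base vertex `0` shows that `w` is additive in the coordinates,
`w_n = w_0 + ∑ i, (w_{0[i ← n_i]} - w_0)`, and such a family is the restriction to the vertices
of an affine map on the whole ambient space. That map sends the polysimplex, the convex hull
of its vertices, into the convex set `V⁺`.
-/

open Function

section Exchange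

variable {ι : Type*} [DecidableEq ι] {α : ι → Type*} {V : Type*} [AddCommGroup V]

theorem piecewise_eq_add_sum_sub_of_exchange {w : (Π i, α i) → V}
    (hw : ∀ n n' i, w n + w n' = w (update n i (n' i)) + w (update n' i (n i)))
    (n₀ n : Π i, α i) (t : Finset ι) :
    w (t.piecewise n n₀) = w n₀ + ∑ i ∈ t, (w (update n₀ i (n i)) - w n₀) := by
  induction t using Finset.induction with
  | empty => simp
  | insert a t ha ih =>
    have hexch := hw (t.piecewise n n₀) (update n₀ a (n a)) a
    rw [update_self, Finset.piecewise_eq_of_notMem _ _ _ ha, update_idem, update_eq_self,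
      ih] at hexch
    rw [Finset.piecewise_insert, Finset.sum_insert ha, eq_sub_of_add_eq hexch.symm]
    abel

theorem eq_add_sum_sub_of_exchange [Fintype ι] {w : (Π i, α i) → V}
    (hw : ∀ n n' i, w n + w n' = w (update n i (n' i)) + w (update n' i (n i)))
    (n₀ n : Π i, α i) :
    w n = w n₀ + ∑ i, (w (update n₀ i (n i)) - w n₀) := by
  simpa using piecewise_eq_add_sum_sub_of_exchange hw n₀ n Finset.univ

end Exchange

section Affine

variable {E V : Type*} [AddCommGroup E] [Module ℝ E] [AddCommGroup V] [Module ℝ V]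

theorem AffineMap.isAffineOn (f : E →ᵃ[ℝ] V) (C : Set E) : IsAffineOn C f :=
  fun _ _ _ _ _ _ _ _ hab => Convex.combo_affine_apply hab

theorem IsAffineOn.add_eq_add {C : Set E} {f : E → V} (hf : IsAffineOn C f)
    {x y x' y' : E} (hx : x ∈ C) (hy : y ∈ C) (hx' : x' ∈ C) (hy' : y' ∈ C)
    (h : x + y = x' + y') : f x + f y = f x' + f y' := by
  have hmid : ∀ {u v}, u ∈ C → v ∈ C → f ((2⁻¹ : ℝ) • (u + v)) = (2⁻¹ : ℝ) • (f u + f v) :=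
    fun hu hv => by
      simpa only [smul_add] using hf _ hu _ hv 2⁻¹ 2⁻¹ (by norm_num) (by norm_num) (by norm_num)
  apply smul_right_injective V (inv_ne_zero (two_ne_zero' ℝ))
  simp only [← hmid hx hy, ← hmid hx' hy', h]

end Affine

section Polysimplex

variable {k : ℕ} {l : Fin (k + 1) → ℕ}

theorem vert_mem_spoly (n : Π i, Fin (l i + 1)) : vert k l n ∈ Spoly k l :=
  fun i _ => single_mem_stdSimplex ℝ (n i)

theorem vert_add_vert_eq_update (n n' : Π i, Fin (l i + 1)) (i : Fin (k + 1)) :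
    vert k l n + vert k l n' =
      vert k l (update n i (n' i)) + vert k l (update n' i (n i)) := by
  funext j
  rcases eq_or_ne j i with rfl | hj
  · simp [vert, add_comm]
  · simp [vert, update_of_ne hj]

theorem spoly_eq_convexHull_range_vert : Spoly k l = convexHull ℝ (Set.range (vert k l)) := by
  have hvert : vert k l = Pi.map fun i (m : Fin (l i + 1)) => Pi.single m 1 := rfl
  rw [hvert, Set.range_piMap, convexHull_pi]
  exact Set.pi_congr rfl fun i _ => (convexHull_rangle_single_eq_stdSimplex ℝ _).symm

variable {V : Type*} [AddCommGroup V] [Module ℝ V]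

theorem AffineMap.mapsTo_spoly {K : Set V} (hK : Convex ℝ K) (f : PolyAmb k l →ᵃ[ℝ] V)
    (hf : ∀ n, f (vert k l n) ∈ K) : Set.MapsTo f (Spoly k l) K := by
  rw [spoly_eq_convexHull_range_vert, Set.mapsTo_iff_image_subset, f.image_convexHull,
    ← Set.range_comp]
  exact convexHull_min (Set.range_subset_iff.2 hf) hK

theorem exists_affineMap_vert_eq (c : V) (d : Π i, Fin (l i + 1) → V) :
    ∃ f : PolyAmb k l →ᵃ[ℝ] V, ∀ n, f (vert k l n) = c + ∑ i, d i (n i) := by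
  refine ⟨(∑ i, (Fintype.linearCombination ℝ (d i)).comp (LinearMap.proj i)).toAffineMap +
    AffineMap.const ℝ _ c, fun n => ?_⟩
  simp [vert, Fintype.linearCombination_apply_single, add_comm]

end Polysimplex

theorem stmt_15_general (k : ℕ) (l : Fin (k + 1) → ℕ)
    {V : Type*} [AddCommGroup V] [Module ℝ V]
    (Vplus : Set V) (hconv : Convex ℝ Vplus)
    (w : (Π i : Fin (k + 1), Fin (l i + 1)) → V) (hw : ∀ n, w n ∈ Vplus) :
    (∃ W : PolyAmb k l → V, IsAffineOn (Spoly k l) W ∧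
        (∀ s ∈ Spoly k l, W s ∈ Vplus) ∧ ∀ n, W (vert k l n) = w n) ↔
      (∀ (n n' : Π i : Fin (k + 1), Fin (l i + 1)) (i : Fin (k + 1)),
        w n + w n' = w (Function.update n i (n' i)) + w (Function.update n' i (n i))) := by
  constructor
  · rintro ⟨W, hW, -, hWv⟩ n n' i
    simpa only [hWv] using hW.add_eq_add (vert_mem_spoly n) (vert_mem_spoly n')
      (vert_mem_spoly _) (vert_mem_spoly _) (vert_add_vert_eq_update n n' i)
  · intro hexch
    obtain ⟨W, hWv⟩ := exists_affineMap_vert_eq (w 0) fun i m => w (update 0 i m) - w 0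
    have hWw : ∀ n, W (vert k l n) = w n := fun n =>
      (hWv n).trans (eq_add_sum_sub_of_exchange hexch 0 n).symm
    exact ⟨W, W.isAffineOn _, W.mapsTo_spoly hconv fun n => hWw n ▸ hw n, hWw⟩

/-- a family `w_{n_0,…,n_k} ∈ V⁺` is the family of vertex images of
an affine map `W : S → V⁺` of the polysimplex into the cone iff it satisfies the
exchange relations
`w_n + w_{n'} = w_{n[i ← n'_i]} + w_{n'[i ← n_i]}` for all `n, n', i`. -/
theorem stmt_15 (k : ℕ) (l : Fin (k + 1) → ℕ)
    {V : Type*} [AddCommGroup V] [Module ℝ V]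
    (Vplus : Set V) (hconv : Convex ℝ Vplus)
    (hcone : ∀ c : ℝ, 0 ≤ c → ∀ v ∈ Vplus, c • v ∈ Vplus)
    (w : (Π i : Fin (k + 1), Fin (l i + 1)) → V) (hw : ∀ n, w n ∈ Vplus) :
    (∃ W : PolyAmb k l → V, IsAffineOn (Spoly k l) W ∧
        (∀ s ∈ Spoly k l, W s ∈ Vplus) ∧ ∀ n, W (vert k l n) = w n) ↔
      (∀ (n n' : Π i : Fin (k + 1), Fin (l i + 1)) (i : Fin (k + 1)),
        w n + w n' = w (Function.update n i (n' i)) + w (Function.update n' i (n i))) :=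
  stmt_15_general k l Vplus hconv w hw
end

section
/- Let S be a polysimplex and K a compact convex set, and W : S → V(K)⁺ affine. W is entanglement breaking if and only if there exist ψ^i_j ∈ V(K)⁺ (j = 0,...,l_i, i = 0,...,k) such that every vertex image satisfies w_{n_0,...,n_k} = Σ_{i=0}^k ψ^i_{n_i}. Equivalently, W = Σ_{i=0}^k Σ_{j=0}^{l_i} m^i_j(·) ψ^i_j. -/
section Aux

variable {k : ℕ} {l : Fin (k + 1) → ℕ}

lemma vert_mem (n : Π i : Fin (k + 1), Fin (l i + 1)) : vert k l n ∈ Spoly k l :=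
  fun i _ => single_mem_stdSimplex ℝ (n i)

lemma spoly_convex : Convex ℝ (Spoly k l) :=
  convex_pi fun _ _ => convex_stdSimplex ℝ _

lemma spoly_nonneg {s : PolyAmb k l} (hs : s ∈ Spoly k l) (i : Fin (k + 1))
    (j : Fin (l i + 1)) : 0 ≤ s i j :=
  (hs i (Set.mem_univ i)).1 j

lemma spoly_sum {s : PolyAmb k l} (hs : s ∈ Spoly k l) (i : Fin (k + 1)) :
    ∑ j, s i j = 1 :=
  (hs i (Set.mem_univ i)).2

/-- Affine maps respect finite convex combinations. -/
lemma affine_sum {E V : Type*} [AddCommGroup E] [Module ℝ E] [AddCommGroup V] [Module ℝ V]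
    {C : Set E} (hC : Convex ℝ C) {g : E → V} (hg : IsAffineOn C g)
    {ι : Type*} (t : Finset ι) (w : ι → ℝ) (x : ι → E)
    (hw : ∀ a ∈ t, 0 ≤ w a) (hw1 : ∑ a ∈ t, w a = 1) (hx : ∀ a ∈ t, x a ∈ C) :
    g (∑ a ∈ t, w a • x a) = ∑ a ∈ t, w a • g (x a) := by
  classical
  induction t using Finset.induction_on generalizing w with
  | empty => simp at hw1
  | @insert a s ha ih =>
    rw [Finset.sum_insert ha] at hw1 ⊢
    rw [Finset.sum_insert ha]
    have hsnn : 0 ≤ ∑ b ∈ s, w b :=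
      Finset.sum_nonneg fun b hb => hw b (Finset.mem_insert_of_mem hb)
    rcases eq_or_lt_of_le hsnn with hzero | hpos
    · have hz : ∀ b ∈ s, w b = 0 := by
        intro b hb
        have := (Finset.sum_eq_zero_iff_of_nonneg
          (fun b hb => hw b (Finset.mem_insert_of_mem hb))).1 hzero.symm
        exact this b hb
      have h1 : w a = 1 := by linarith
      have h2 : ∑ b ∈ s, w b • x b = 0 :=
        Finset.sum_eq_zero fun b hb => by rw [hz b hb, zero_smul]
      have h3 : ∑ b ∈ s, w b • g (x b) = 0 :=
        Finset.sum_eq_zero fun b hb => by rw [hz b hb, zero_smul]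
      rw [h1, h2, h3, one_smul, add_zero, one_smul, add_zero]
    · set c : ℝ := ∑ b ∈ s, w b with hc
      set y : E := ∑ b ∈ s, (w b / c) • x b with hy
      have hyC : y ∈ C := by
        apply hC.sum_mem
        · intro b hb; exact div_nonneg (hw b (Finset.mem_insert_of_mem hb)) hsnn
        · rw [← Finset.sum_div, ← hc, div_self hpos.ne']
        · intro b hb; exact hx b (Finset.mem_insert_of_mem hb)
      have hcy : ∑ b ∈ s, w b • x b = c • y := by
        rw [hy, Finset.smul_sum]
        refine Finset.sum_congr rfl fun b hb => ?_
        rw [smul_smul, mul_div_cancel₀ _ hpos.ne']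
      have key := hg (x a) (hx a (Finset.mem_insert_self a s)) y hyC (w a) c
        (hw a (Finset.mem_insert_self a s)) hpos.le hw1
      rw [hcy, key]
      congr 1
      rw [ih (fun b => w b / c) (fun b hb => div_nonneg (hw b (Finset.mem_insert_of_mem hb)) hsnn)
        (by rw [← Finset.sum_div, ← hc, div_self hpos.ne'])
        (fun b hb => hx b (Finset.mem_insert_of_mem hb)), Finset.smul_sum]
      refine Finset.sum_congr rfl fun b hb => ?_
      rw [smul_smul, mul_div_cancel₀ _ hpos.ne']

/-- marginal computation -/
lemma marginal {V : Type*} [AddCommGroup V] [Module ℝ V]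
    {s : PolyAmb k l} (hs : s ∈ Spoly k l) (i : Fin (k + 1))
    (ψ : Fin (l i + 1) → V) :
    ∑ n : Π t : Fin (k + 1), Fin (l t + 1), (∏ t, s t (n t)) • ψ (n i)
      = ∑ m : Fin (l i + 1), s i m • ψ m := by
  classical
  have key : ∀ m : Fin (l i + 1),
      (∑ n : Π t : Fin (k + 1), Fin (l t + 1),
        if n i = m then ∏ t, s t (n t) else 0) = s i m := by
    intro m
    set g : Π t : Fin (k + 1), Fin (l t + 1) → ℝ := fun t j =>
      if (⟨t, j⟩ : Σ t' : Fin (k + 1), Fin (l t' + 1)) = ⟨i, m⟩ ∨ t ≠ i then s t j else 0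
      with hg
    have hg1 : ∀ j : Fin (l i + 1), g i j = if j = m then s i j else 0 := by
      intro j; simp [hg, Sigma.mk.inj_iff]
    have hg2 : ∀ t : Fin (k + 1), t ≠ i → ∀ j : Fin (l t + 1), g t j = s t j := by
      intro t ht j; simp [hg, ht]
    have step1 : ∀ n : Π t : Fin (k + 1), Fin (l t + 1),
        (if n i = m then ∏ t, s t (n t) else 0) = ∏ t, g t (n t) := by
      intro n
      by_cases h : n i = m
      · rw [if_pos h]
        refine (Finset.prod_congr rfl fun t _ => ?_).symm
        by_cases ht : t = i
        · subst ht
          rw [hg1, if_pos h]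
        · exact hg2 t ht (n t)
      · rw [if_neg h]
        symm
        refine Finset.prod_eq_zero (Finset.mem_univ i) ?_
        rw [hg1, if_neg h]
    calc (∑ n : Π t : Fin (k + 1), Fin (l t + 1),
        if n i = m then ∏ t, s t (n t) else 0)
        = ∑ n : Π t : Fin (k + 1), Fin (l t + 1), ∏ t, g t (n t) :=
          Finset.sum_congr rfl fun n _ => step1 n
      _ = ∏ t, ∑ j, g t j := (Fintype.prod_sum g).symm
      _ = s i m := by
          rw [Finset.prod_eq_single i]
          · rw [Finset.sum_congr rfl fun j _ => hg1 j,
              Finset.sum_ite_eq' Finset.univ m (fun j => s i j), if_pos (Finset.mem_univ _)]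
          · intro t _ ht
            rw [Finset.sum_congr rfl fun j _ => hg2 t ht j]
            exact spoly_sum hs t
          · intro h; exact absurd (Finset.mem_univ i) h
  calc ∑ n : Π t : Fin (k + 1), Fin (l t + 1), (∏ t, s t (n t)) • ψ (n i)
      = ∑ n : Π t : Fin (k + 1), Fin (l t + 1), ∑ m : Fin (l i + 1),
          (if n i = m then ∏ t, s t (n t) else 0) • ψ m := by
        refine Finset.sum_congr rfl fun n _ => ?_
        simp only [ite_smul, zero_smul]
        rw [Finset.sum_ite_eq Finset.univ (n i) (fun m => (∏ t, s t (n t)) • ψ m),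
          if_pos (Finset.mem_univ _)]
    _ = ∑ m : Fin (l i + 1), ∑ n : Π t : Fin (k + 1), Fin (l t + 1),
          (if n i = m then ∏ t, s t (n t) else 0) • ψ m := Finset.sum_comm
    _ = ∑ m : Fin (l i + 1), s i m • ψ m := by
        refine Finset.sum_congr rfl fun m _ => ?_
        rw [← Finset.sum_smul, key m]

lemma sum_w_one {s : PolyAmb k l} (hs : s ∈ Spoly k l) :
    ∑ n : Π t : Fin (k + 1), Fin (l t + 1), ∏ t, s t (n t) = 1 := by
  rw [← Fintype.prod_sum (fun t j => s t j)]
  exact Finset.prod_eq_one fun t _ => spoly_sum hs t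

/-- every point of the polysimplex is the canonical convex combination of vertices -/
lemma decomp_vert {s : PolyAmb k l} (hs : s ∈ Spoly k l) :
    ∑ n : Π t : Fin (k + 1), Fin (l t + 1), (∏ t, s t (n t)) • vert k l n = s := by
  funext i
  funext j
  rw [Finset.sum_apply, Finset.sum_apply]
  have : ∀ n : Π t : Fin (k + 1), Fin (l t + 1),
      ((∏ t, s t (n t)) • vert k l n) i j
        = (∏ t, s t (n t)) • ((fun m : Fin (l i + 1) => (Pi.single m (1:ℝ) : Fin (l i + 1) → ℝ) j) (n i)) := by
    intro n; rfl
  rw [Finset.sum_congr rfl fun n _ => this n, marginal hs i (fun m => (Pi.single m (1:ℝ) : Fin (l i + 1) → ℝ) j)]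
  simp only [smul_eq_mul, Pi.single_apply, mul_ite, mul_one, mul_zero]
  rw [Finset.sum_ite_eq Finset.univ j (fun m => s i m), if_pos (Finset.mem_univ _)]

/-- multi-affine vertex identity -/
lemma vertex_vals {g : PolyAmb k l → ℝ} (hg : IsAffineOn (Spoly k l) g)
    (n : Π t : Fin (k + 1), Fin (l t + 1)) :
    g (vert k l n) + ((k : ℝ) + 1) * g (vert k l fun _ => 0) =
      (∑ i, g (vert k l fun t => if t = i then n t else 0)) + g (vert k l fun _ => 0) := by
  classical
  have h : ∀ T : Finset (Fin (k + 1)),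
      g (vert k l fun t => if t ∈ T then n t else 0) + (T.card : ℝ) * g (vert k l fun _ => 0)
        = (∑ i ∈ T, g (vert k l fun t => if t = i then n t else 0))
          + g (vert k l fun _ => 0) := by
    intro T
    induction T using Finset.induction_on with
    | empty => simp
    | @insert i T hi ih =>
      have halfeq : (1/2 : ℝ) • vert k l (fun t => if t ∈ insert i T then n t else 0)
          + (1/2 : ℝ) • vert k l (fun _ => 0)
          = (1/2 : ℝ) • vert k l (fun t => if t ∈ T then n t else 0)
          + (1/2 : ℝ) • vert k l (fun t => if t = i then n t else 0) := by
        funext t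
        by_cases h1 : t = i
        · subst h1
          simp only [vert, Pi.add_apply, Pi.smul_apply, Finset.mem_insert_self, if_true,
            hi, if_false, if_pos rfl, Finset.mem_insert, or_false]
          exact add_comm _ _
        · by_cases h2 : t ∈ T <;>
            simp [vert, Finset.mem_insert, h1, h2]
      have e1 := hg (vert k l fun t => if t ∈ insert i T then n t else 0) (vert_mem _)
        (vert k l fun _ => 0) (vert_mem _) (1/2) (1/2)
        (by norm_num) (by norm_num) (by norm_num)
      have e2 := hg (vert k l fun t => if t ∈ T then n t else 0) (vert_mem _)
        (vert k l fun t => if t = i then n t else 0) (vert_mem _) (1/2) (1/2)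
        (by norm_num) (by norm_num) (by norm_num)
      rw [halfeq, e2] at e1
      simp only [smul_eq_mul] at e1
      rw [Finset.sum_insert hi, Finset.card_insert_of_notMem hi]
      push_cast
      linarith
  have := h Finset.univ
  simp only [Finset.mem_univ, if_true, Finset.card_univ, Fintype.card_fin] at this
  push_cast at this
  linarith

/-- the vertex of the `i`-th factor with index `m` (all other factors at `0`) -/
def delta (i : Fin (k + 1)) (m : Fin (l i + 1)) : Π t : Fin (k + 1), Fin (l t + 1) :=
  fun t => if h : t = i then h.symm ▸ m else 0

lemma delta_same (i : Fin (k + 1)) (m : Fin (l i + 1)) : delta i m i = m := by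
  simp [delta]

lemma delta_other {i t : Fin (k + 1)} (h : t ≠ i) (m : Fin (l i + 1)) : delta i m t = 0 := by
  simp [delta, h]

lemma sel_eq_delta (i : Fin (k + 1)) (n : Π t : Fin (k + 1), Fin (l t + 1)) :
    (fun t => if t = i then n t else 0) = delta i (n i) := by
  funext t
  by_cases h : t = i
  · subst h; rw [if_pos rfl, delta_same]
  · rw [if_neg h, delta_other h]

/-- a nonnegative affine function decomposes with nonnegative coefficients at vertices -/
lemma scalar_decomp {g : PolyAmb k l → ℝ} (hg : IsAffineOn (Spoly k l) g)
    (hgpos : ∀ s ∈ Spoly k l, 0 ≤ g s) :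
    ∃ c : Π i : Fin (k + 1), Fin (l i + 1) → ℝ,
      (∀ i m, 0 ≤ c i m) ∧
      ∀ n : Π t : Fin (k + 1), Fin (l t + 1), g (vert k l n) = ∑ i, c i (n i) := by
  classical
  set H : Π i : Fin (k + 1), Fin (l i + 1) → ℝ := fun i m =>
    g (vert k l (delta i m)) - ((k : ℝ) / (k + 1)) * g (vert k l fun _ => 0) with hHdef
  have hk1 : ((k : ℝ) + 1) ≠ 0 := by positivity
  have hH : ∀ n : Π t : Fin (k + 1), Fin (l t + 1), g (vert k l n) = ∑ i, H i (n i) := by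
    intro n
    have hv := vertex_vals hg n
    have : ∑ i, H i (n i)
        = (∑ i, g (vert k l (delta i (n i))))
          - ((k : ℝ) + 1) * (((k : ℝ) / (k + 1)) * g (vert k l fun _ => 0)) := by
      rw [hHdef, Finset.sum_sub_distrib, Finset.sum_const, Finset.card_univ,
        Fintype.card_fin, nsmul_eq_mul]
      push_cast
      ring
    rw [this]
    have hsel : ∀ i : Fin (k + 1),
        g (vert k l (delta i (n i))) = g (vert k l fun t => if t = i then n t else 0) := by
      intro i; rw [sel_eq_delta]
    rw [Finset.sum_congr rfl fun i _ => hsel i]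
    field_simp
    linarith
  choose a _ ha using fun i : Fin (k + 1) =>
    Finset.exists_min_image Finset.univ (H i) ⟨0, Finset.mem_univ 0⟩
  refine ⟨fun i m => H i m +
      (if i = 0 then ∑ t : Fin k, H t.succ (a t.succ) else -(H i (a i))), ?_, ?_⟩
  · intro i m
    dsimp only
    by_cases h : i = 0
    · subst h
      rw [if_pos rfl]
      set nst : Π t : Fin (k + 1), Fin (l t + 1) :=
        fun t => if h : t = 0 then h.symm ▸ m else a t with hnst
      have h0 : nst 0 = m := by simp [hnst]
      have hsucc : ∀ t : Fin k, nst t.succ = a t.succ := by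
        intro t; simp [hnst, Fin.succ_ne_zero t]
      have hge := hgpos (vert k l nst) (vert_mem nst)
      rw [hH nst, Fin.sum_univ_succ, h0] at hge
      rw [Finset.sum_congr rfl (fun t (_ : t ∈ Finset.univ) => by rw [hsucc t])] at hge
      linarith
    · rw [if_neg h]
      have := ha i m (Finset.mem_univ m)
      linarith
  · intro n
    dsimp only
    rw [Finset.sum_add_distrib]
    have hz : ∑ i : Fin (k + 1),
        (if i = 0 then ∑ t : Fin k, H t.succ (a t.succ) else -(H i (a i))) = 0 := by
      rw [Fin.sum_univ_succ, if_pos rfl]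
      rw [Finset.sum_congr rfl
        (fun t (_ : t ∈ Finset.univ) => if_neg (Fin.succ_ne_zero t))]
      rw [← Finset.sum_add_distrib]
      simp
    rw [hz, add_zero]
    exact hH n

lemma cone_smul {E : Type*} [AddCommGroup E] [Module ℝ E] {K : Set E} {r : ℝ} (hr : 0 ≤ r)
    {v : E} (hv : v ∈ coneOf K) : r • v ∈ coneOf K := by
  obtain ⟨c, hc, x, hx, rfl⟩ := hv
  exact ⟨r * c, mul_nonneg hr hc, x, hx, (mul_smul r c x).symm⟩

lemma cone_add {E : Type*} [AddCommGroup E] [Module ℝ E] {K : Set E} (hK : Convex ℝ K)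
    {v u : E} (hv : v ∈ coneOf K) (hu : u ∈ coneOf K) : v + u ∈ coneOf K := by
  obtain ⟨c, hc, x, hx, rfl⟩ := hv
  obtain ⟨d, hd, y, hy, rfl⟩ := hu
  rcases eq_or_lt_of_le (by linarith : (0:ℝ) ≤ c + d) with h0 | hpos
  · have hc0 : c = 0 := by linarith
    have hd0 : d = 0 := by linarith
    exact ⟨0, le_refl 0, x, hx, by rw [hc0, hd0]; simp⟩
  · refine ⟨c + d, hpos.le, (c / (c + d)) • x + (d / (c + d)) • y,
      hK hx hy (div_nonneg hc hpos.le) (div_nonneg hd hpos.le)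
        (by field_simp), ?_⟩
    rw [smul_add, smul_smul, smul_smul, mul_div_cancel₀ _ hpos.ne', mul_div_cancel₀ _ hpos.ne']

lemma cone_sum {E : Type*} [AddCommGroup E] [Module ℝ E] {K : Set E} (hK : Convex ℝ K)
    (hne : K.Nonempty) {ι : Type*} (t : Finset ι) (v : ι → E)
    (hv : ∀ a ∈ t, v a ∈ coneOf K) : (∑ a ∈ t, v a) ∈ coneOf K := by
  classical
  induction t using Finset.induction_on with
  | empty =>
    obtain ⟨x, hx⟩ := hne
    exact ⟨0, le_refl 0, x, hx, by rw [Finset.sum_empty, zero_smul]⟩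
  | @insert a s ha ih =>
    rw [Finset.sum_insert ha]
    exact cone_add hK (hv a (Finset.mem_insert_self a s))
      (ih fun b hb => hv b (Finset.mem_insert_of_mem hb))

end Aux

/-- an affine map `W : S → V(K)⁺` on the polysimplex is
entanglement breaking iff there exist `ψ^i_j ∈ V(K)⁺` with
`W(s_{n_0,…,n_k}) = Σ_i ψ^i_{n_i}` for every vertex; equivalently
`W = Σ_{i,j} m^i_j(·) ψ^i_j`. -/
theorem stmt_16 (k : ℕ) (l : Fin (k + 1) → ℕ)
    {E : Type*} [AddCommGroup E] [Module ℝ E]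
    (K : Set E) (hK : Convex ℝ K)
    (W : PolyAmb k l → E) (hW : IsAffineOn (Spoly k l) W)
    (hWpos : ∀ s ∈ Spoly k l, W s ∈ coneOf K) :
    ETBOn (Spoly k l) (coneOf K) W ↔
      ∃ ψ : Π i : Fin (k + 1), Fin (l i + 1) → E,
        (∀ i j, ψ i j ∈ coneOf K) ∧
        (∀ n : Π i : Fin (k + 1), Fin (l i + 1),
          W (vert k l n) = ∑ i : Fin (k + 1), ψ i (n i)) ∧
        (∀ s ∈ Spoly k l, W s = ∑ i : Fin (k + 1), ∑ j : Fin (l i + 1), s i j • ψ i j) := by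
  classical
  constructor
  · rintro ⟨N, f, φ, haff, hpos, hφ, hrep⟩
    choose c hc hcv using fun j : Fin N => scalar_decomp (haff j) (hpos j)
    have hKne : K.Nonempty := by
      obtain ⟨c', _, x, hx, _⟩ := hWpos (vert k l fun _ => 0) (vert_mem _)
      exact ⟨x, hx⟩
    have h2 : ∀ n : Π t : Fin (k + 1), Fin (l t + 1),
        W (vert k l n) = ∑ i : Fin (k + 1), ∑ j : Fin N, c j i (n i) • φ j := by
      intro n
      rw [hrep (vert k l n) (vert_mem n),
        Finset.sum_congr rfl fun j (_ : j ∈ Finset.univ) => by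
          rw [hcv j n, Finset.sum_smul]]
      exact Finset.sum_comm
    refine ⟨fun i m => ∑ j, c j i m • φ j, ?_, ?_, ?_⟩
    · intro i m
      exact cone_sum hK hKne Finset.univ _ fun j _ => cone_smul (hc j i m) (hφ j)
    · intro n
      dsimp only
      exact h2 n
    · intro s hs
      dsimp only
      have hrw : W s = ∑ n : Π t : Fin (k + 1), Fin (l t + 1),
          (∏ t, s t (n t)) • W (vert k l n) := by
        conv_lhs => rw [← decomp_vert hs]
        exact affine_sum spoly_convex hW Finset.univ _ _
          (fun n _ => Finset.prod_nonneg fun t _ => spoly_nonneg hs t (n t))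
          (sum_w_one hs) (fun n _ => vert_mem n)
      rw [hrw, Finset.sum_congr rfl fun n (_ : n ∈ Finset.univ) => by
          rw [h2 n, Finset.smul_sum],
        Finset.sum_comm]
      exact Finset.sum_congr rfl fun i _ =>
        marginal hs i (fun m => ∑ j, c j i m • φ j)
  · rintro ⟨ψ, hcone, -, hrep⟩
    refine ⟨Fintype.card (Σ i : Fin (k + 1), Fin (l i + 1)),
      fun j s => s ((Fintype.equivFin (Σ i : Fin (k + 1), Fin (l i + 1))).symm j).1
        ((Fintype.equivFin (Σ i : Fin (k + 1), Fin (l i + 1))).symm j).2,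
      fun j => ψ ((Fintype.equivFin (Σ i : Fin (k + 1), Fin (l i + 1))).symm j).1
        ((Fintype.equivFin (Σ i : Fin (k + 1), Fin (l i + 1))).symm j).2,
      ?_, ?_, ?_, ?_⟩
    · intro j x _ y _ a b _ _ _
      simp
    · intro j s hs
      exact spoly_nonneg hs _ _
    · intro j
      exact hcone _ _
    · intro s hs
      have h1 : ∑ p : Σ i : Fin (k + 1), Fin (l i + 1), s p.1 p.2 • ψ p.1 p.2
          = ∑ j : Fin (Fintype.card (Σ i : Fin (k + 1), Fin (l i + 1))),
            s ((Fintype.equivFin (Σ i : Fin (k + 1), Fin (l i + 1))).symm j).1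
              ((Fintype.equivFin (Σ i : Fin (k + 1), Fin (l i + 1))).symm j).2
            • ψ ((Fintype.equivFin (Σ i : Fin (k + 1), Fin (l i + 1))).symm j).1
              ((Fintype.equivFin (Σ i : Fin (k + 1), Fin (l i + 1))).symm j).2 :=
        Fintype.sum_equiv (Fintype.equivFin (Σ i : Fin (k + 1), Fin (l i + 1)))
          _ _ (fun p => by rw [Equiv.symm_apply_apply])
      have h2 : ∑ p : Σ i : Fin (k + 1), Fin (l i + 1), s p.1 p.2 • ψ p.1 p.2
          = ∑ i : Fin (k + 1), ∑ m : Fin (l i + 1), s i m • ψ i m := by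
        rw [← Finset.univ_sigma_univ, Finset.sum_sigma]
      exact (hrep s hs).trans (h2.symm.trans h1)
end

section
/- Let K be a compact convex set with dim K = 2 (e.g., a planar state space), and let W : □_2 → V(K)⁺ be an affine map that is not entanglement breaking. Then W is extremal in the cone of positive affine maps A(□_2, V(K)⁺) if and only if all four vertex images w_{i,j} = W(s_{i,j}) generate extreme rays of V(K)⁺. -/
/-!
The vertex values `w k = W (sqVert k.1 k.2)` of an affine map on the square determine it and
satisfy `w₀₀ - w₀₁ - w₁₀ + w₁₁ = 0`.

If the `w k` span at most a plane, then, normalised by a functional strictly positive on the cone,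
they lie on a line, so the two extreme ones generate a simplicial cone containing the image of
`W`; its coordinate functionals make `W` entanglement breaking. Hence for our `W` the `w k` span a
3-space and the relation above is the only one: no `w k` vanishes, and if all `w k` are extremal,
a map `W' ≤ W` equals `t • w k` at every vertex with one common `t`.

Conversely, if `v ≤ w k₀` is not proportional to `w k₀`, the spaces `span {w k, v k}` (with
`v k = w k` for `k ≠ k₀`) have total dimension at least 5 inside the at most 3-dimensional span of
the cone. This leaves a perturbation `z`, not proportional to `w`, obeying the vertex relation and
with `w k ± t • z k` in the cone for small `t`; the affine map interpolating `(w + t • z) / 2` lies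
between `0` and `W` without being a multiple of `W`.
-/

def Square : Set ((Fin 2 → ℝ) × (Fin 2 → ℝ)) :=
  (stdSimplex ℝ (Fin 2)) ×ˢ (stdSimplex ℝ (Fin 2))

def sqVert (i j : Fin 2) : (Fin 2 → ℝ) × (Fin 2 → ℝ) := (Pi.single i 1, Pi.single j 1)

/-- An element `v` of a cone `P` is extremal: `v ≠ 0` and any `v' ∈ P` with
`v − v' ∈ P` is a nonnegative multiple of `v`. -/
def ExtremalIn {V : Type*} [AddCommGroup V] [Module ℝ V] (P : Set V) (v : V) : Prop :=
  v ∈ P ∧ v ≠ 0 ∧ ∀ v' ∈ P, v - v' ∈ P → ∃ t : ℝ, 0 ≤ t ∧ v' = t • v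

/-- `W` is extremal in the cone of positive affine maps `□_2 → P` (ordered
pointwise by the cone `P`). -/
def ExtremalMap {E : Type*} [AddCommGroup E] [Module ℝ E]
    (P : Set E) (W : ((Fin 2 → ℝ) × (Fin 2 → ℝ)) → E) : Prop :=
  (¬ ∀ s ∈ Square, W s = 0) ∧
  ∀ W' : ((Fin 2 → ℝ) × (Fin 2 → ℝ)) → E, IsAffineOn Square W' →
    (∀ s ∈ Square, W' s ∈ P) → (∀ s ∈ Square, W s - W' s ∈ P) →
    ∃ t : ℝ, 0 ≤ t ∧ ∀ s ∈ Square, W' s = t • W s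


open Module Submodule Set Filter Topology

section AffineOn

variable {F V : Type*} [AddCommGroup F] [Module ℝ F] [AddCommGroup V] [Module ℝ V]
  {D : Set F} {f g : F → V}

lemma IsAffineOn.add (hf : IsAffineOn D f) (hg : IsAffineOn D g) : IsAffineOn D (f + g) := by
  intro x hx y hy a b ha hb hab
  simp only [Pi.add_apply, hf x hx y hy a b ha hb hab, hg x hx y hy a b ha hb hab, smul_add]
  abel

lemma IsAffineOn.const_smul (hf : IsAffineOn D f) (c : ℝ) : IsAffineOn D (c • f) := by
  intro x hx y hy a b ha hb hab
  simp only [Pi.smul_apply, hf x hx y hy a b ha hb hab, smul_add, smul_comm c]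

lemma IsAffineOn.sub (hf : IsAffineOn D f) (hg : IsAffineOn D g) : IsAffineOn D (f - g) := by
  simpa [sub_eq_add_neg] using hf.add (hg.const_smul (-1))

lemma IsAffineOn.comp_linearMap {V' : Type*} [AddCommGroup V'] [Module ℝ V']
    (hf : IsAffineOn D f) (l : V →ₗ[ℝ] V') : IsAffineOn D (l ∘ f) := by
  intro x hx y hy a b ha hb hab
  simp [hf x hx y hy a b ha hb hab]

end AffineOn

section Square

variable {V : Type*} [AddCommGroup V] [Module ℝ V] {f g : (Fin 2 → ℝ) × (Fin 2 → ℝ) → V}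

lemma sqVert_mem_Square (i j : Fin 2) : sqVert i j ∈ Square :=
  ⟨single_mem_stdSimplex ℝ i, single_mem_stdSimplex ℝ j⟩

def vertexImages (f : (Fin 2 → ℝ) × (Fin 2 → ℝ) → V) (k : Fin 2 × Fin 2) : V :=
  f (sqVert k.1 k.2)

def squareSign (k : Fin 2 × Fin 2) : ℝ := if k.1 = k.2 then 1 else -1

lemma squareSign_ne_zero (k : Fin 2 × Fin 2) : squareSign k ≠ 0 := by
  unfold squareSign; split_ifs <;> norm_num

lemma sum_squareSign_smul_eq (z : Fin 2 × Fin 2 → V) :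
    ∑ k, squareSign k • z k = z (0, 0) - z (0, 1) - z (1, 0) + z (1, 1) := by
  simp only [squareSign, ite_smul, one_smul, neg_smul, Fintype.sum_prod_type, Fin.sum_univ_two,
    Fin.isValue, ↓reduceIte, zero_ne_one, one_ne_zero]
  abel

lemma IsAffineOn.eq_sum_vertex (hf : IsAffineOn Square f) {s : (Fin 2 → ℝ) × (Fin 2 → ℝ)}
    (hs : s ∈ Square) :
    f s = ∑ k : Fin 2 × Fin 2, (s.1 k.1 * s.2 k.2) • vertexImages f k := by
  have hsimplex {x : Fin 2 → ℝ} (hx : x ∈ stdSimplex ℝ (Fin 2)) :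
      x = x 0 • Pi.single 0 1 + x 1 • Pi.single 1 1 ∧ x 0 + x 1 = 1 := by
    refine ⟨?_, by simpa [Fin.sum_univ_two] using hx.2⟩
    ext i; fin_cases i <;> simp
  obtain ⟨hx, hy⟩ := hs
  obtain ⟨hx_eq, hx_sum⟩ := hsimplex hx
  obtain ⟨hy_eq, hy_sum⟩ := hsimplex hy
  have hfst : f s = s.1 0 • f (Pi.single 0 1, s.2) + s.1 1 • f (Pi.single 1 1, s.2) := by
    have : s = s.1 0 • (Pi.single 0 1, s.2) + s.1 1 • (Pi.single 1 1, s.2) := by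
      ext1
      · exact hx_eq
      · simp [← add_smul, hx_sum]
    conv_lhs => rw [this]
    exact hf (Pi.single 0 1, s.2) ⟨single_mem_stdSimplex ℝ 0, hy⟩ (Pi.single 1 1, s.2)
      ⟨single_mem_stdSimplex ℝ 1, hy⟩ _ _ (hx.1 0) (hx.1 1) hx_sum
  have hsnd (i : Fin 2) :
      f (Pi.single i 1, s.2) = s.2 0 • f (sqVert i 0) + s.2 1 • f (sqVert i 1) := by
    have : ((Pi.single i 1, s.2) : (Fin 2 → ℝ) × (Fin 2 → ℝ)) =
        s.2 0 • sqVert i 0 + s.2 1 • sqVert i 1 := by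
      ext1
      · simp [sqVert, ← add_smul, hy_sum]
      · exact hy_eq
    rw [this]
    exact hf _ ⟨single_mem_stdSimplex ℝ i, single_mem_stdSimplex ℝ (0 : Fin 2)⟩ _
      ⟨single_mem_stdSimplex ℝ i, single_mem_stdSimplex ℝ (1 : Fin 2)⟩ _ _ (hy.1 0) (hy.1 1) hy_sum
  simp only [vertexImages, hfst, hsnd, Fintype.sum_prod_type, Fin.sum_univ_two, smul_add, mul_smul]

lemma IsAffineOn.eqOn_of_vertex (hf : IsAffineOn Square f) (hg : IsAffineOn Square g)
    (h : vertexImages f = vertexImages g) :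
    ∀ s ∈ Square, f s = g s := fun s hs => by
  rw [hf.eq_sum_vertex hs, hg.eq_sum_vertex hs, h]

lemma IsAffineOn.mem_of_vertex_mem (C : PointedCone ℝ V) (hf : IsAffineOn Square f)
    (h : ∀ k, vertexImages f k ∈ C) : ∀ s ∈ Square, f s ∈ C := fun s hs => by
  rw [hf.eq_sum_vertex hs]
  exact sum_mem fun k _ => C.smul_mem (mul_nonneg (hs.1.1 _) (hs.2.1 _)) (h k)

lemma IsAffineOn.sum_squareSign_smul (hf : IsAffineOn Square f) :
    ∑ k, squareSign k • vertexImages f k = 0 := by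
  have hhalf {p q} (hp : p ∈ Square) (hq : q ∈ Square) :
      f ((2⁻¹ : ℝ) • p + (2⁻¹ : ℝ) • q) = (2⁻¹ : ℝ) • f p + (2⁻¹ : ℝ) • f q :=
    hf p hp q hq _ _ (by norm_num) (by norm_num) (by norm_num)
  have hmid : (2⁻¹ : ℝ) • sqVert 0 0 + (2⁻¹ : ℝ) • sqVert 1 1 =
      (2⁻¹ : ℝ) • sqVert 0 1 + (2⁻¹ : ℝ) • sqVert 1 0 :=
    Prod.ext rfl (add_comm _ _)
  have h := hhalf (sqVert_mem_Square 0 0) (sqVert_mem_Square 1 1)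
  rw [hmid, hhalf (sqVert_mem_Square 0 1) (sqVert_mem_Square 1 0)] at h
  rw [sum_squareSign_smul_eq]
  simp only [vertexImages]
  linear_combination (norm := module) (-2 : ℝ) • h

lemma exists_isAffineOn_of_sum_squareSign_smul {z : Fin 2 × Fin 2 → V}
    (hz : ∑ k, squareSign k • z k = 0) :
    ∃ ζ, IsAffineOn Square ζ ∧ vertexImages ζ = z := by
  refine ⟨fun s => z (0, 0) + s.1 1 • (z (1, 0) - z (0, 0)) + s.2 1 • (z (0, 1) - z (0, 0)),
    ?_, ?_⟩
  · intro x _ y _ a b _ _ hab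
    simp only [Prod.fst_add, Prod.snd_add, Prod.smul_fst, Prod.smul_snd, Pi.add_apply,
      Pi.smul_apply, smul_eq_mul]
    linear_combination (norm := module) (-hab) • z (0, 0)
  · rw [sum_squareSign_smul_eq] at hz
    ext ⟨i, j⟩
    fin_cases i <;> fin_cases j <;>
      simp only [vertexImages, sqVert, Fin.isValue, Fin.zero_eta, Fin.mk_one, ne_eq, one_ne_zero,
        not_false_eq_true, Pi.single_eq_of_ne, Pi.single_eq_same, zero_smul, one_smul, add_zero,
        add_sub_cancel]
    linear_combination (norm := module) -hz

end Square

section ConeOf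

variable {E : Type*} [AddCommGroup E] [Module ℝ E] {K : Set E}

lemma smul_add_smul_mem_coneOf (hK : Convex ℝ K) {x y : E} (hx : x ∈ coneOf K)
    (hy : y ∈ coneOf K) {a b : ℝ} (ha : 0 ≤ a) (hb : 0 ≤ b) : a • x + b • y ∈ coneOf K := by
  obtain ⟨c, hc, x, hxK, rfl⟩ := hx
  obtain ⟨d, hd, y, hyK, rfl⟩ := hy
  have hac : 0 ≤ a * c := mul_nonneg ha hc
  have hbd : 0 ≤ b * d := mul_nonneg hb hd
  rw [smul_smul, smul_smul]
  rcases (add_nonneg hac hbd).eq_or_lt with h | h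
  · obtain ⟨h1, h2⟩ := (add_eq_zero_iff_of_nonneg hac hbd).1 h.symm
    exact ⟨0, le_rfl, x, hxK, by simp [h1, h2]⟩
  · refine ⟨a * c + b * d, h.le, (a * c / (a * c + b * d)) • x + (b * d / (a * c + b * d)) • y,
      hK hxK hyK (by positivity) (by positivity) (by field_simp), ?_⟩
    rw [smul_add, smul_smul, smul_smul, mul_div_cancel₀ _ h.ne', mul_div_cancel₀ _ h.ne']

lemma exists_pointedCone_coe_eq_coneOf (hK : Convex ℝ K) (hne : K.Nonempty) :
    ∃ C : PointedCone ℝ E, (C : Set E) = coneOf K :=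
  ⟨.ofConeComb (coneOf K) (hne.elim fun x hx => ⟨0, 0, le_rfl, x, hx, (zero_smul ℝ x).symm⟩)
    fun _ hx _ hy _ ha _ hb => smul_add_smul_mem_coneOf hK hx hy ha hb, rfl⟩

lemma span_coneOf_le : span ℝ (coneOf K) ≤ span ℝ K :=
  span_le.2 fun _ ⟨c, _, _, hx, h⟩ => h ▸ smul_mem _ c (subset_span hx)

lemma finrank_span_le_finrank_vectorSpan_add_one [FiniteDimensional ℝ E] {x₀ : E} (hx₀ : x₀ ∈ K) :
    finrank ℝ (span ℝ K) ≤ finrank ℝ (vectorSpan ℝ K) + 1 := by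
  have hle : span ℝ K ≤ vectorSpan ℝ K ⊔ ℝ ∙ x₀ := span_le.2 fun x hx =>
    (sub_add_cancel x x₀) ▸ add_mem_sup (vsub_mem_vectorSpan ℝ hx hx₀) (mem_span_singleton_self x₀)
  have hx₀_le : finrank ℝ (ℝ ∙ x₀) ≤ 1 := by simpa using finrank_span_le_card (R := ℝ) {x₀}
  have := (Submodule.finrank_mono hle).trans (finrank_add_le_finrank_add_finrank _ _)
  omega

lemma exists_linearMap_pos_of_mem_coneOf {E : Type*} [NormedAddCommGroup E] [NormedSpace ℝ E]
    {K : Set E} (hK : Convex ℝ K) (hKc : IsCompact K) (h0 : (0 : E) ∉ K) :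
    ∃ e : E →ₗ[ℝ] ℝ, ∀ v ∈ coneOf K, v ≠ 0 → 0 < e v := by
  obtain ⟨e, u, he0, heK⟩ := geometric_hahn_banach_point_closed hK hKc.isClosed h0
  refine ⟨e, ?_⟩
  rintro _ ⟨c, hc, x, hx, rfl⟩ hv
  have hc' : 0 < c := hc.lt_of_ne (by rintro rfl; simp at hv)
  simpa using mul_pos hc' ((map_zero e ▸ he0).trans (heK x hx))

end ConeOf

section Simplicial

variable {E : Type*} [AddCommGroup E] [Module ℝ E]

lemma Collinear.exists_forall_mem_segment {ι : Type*} [Finite ι] [Nonempty ι] {p : ι → E}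
    (hp : Collinear ℝ (range p)) : ∃ a b, ∀ k, p k ∈ segment ℝ (p a) (p b) := by
  obtain ⟨k₀⟩ := ‹Nonempty ι›
  obtain ⟨v, hv⟩ := (collinear_iff_of_mem (mem_range_self k₀)).1 hp
  choose t ht using fun k => hv (p k) (mem_range_self k)
  obtain ⟨a, ha⟩ := Finite.exists_min t
  obtain ⟨b, hb⟩ := Finite.exists_max t
  let ℓ : ℝ →ᵃ[ℝ] E := AffineMap.lineMap (p k₀) (p k₀ + v)
  have hℓ (k : ι) : ℓ (t k) = p k := by
    rw [ht k, AffineMap.lineMap_apply_module', add_sub_cancel_left, vadd_eq_add]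
  refine ⟨a, b, fun k => ?_⟩
  rw [← hℓ k, ← hℓ a, ← hℓ b, ← image_segment, segment_eq_Icc (ha b)]
  exact mem_image_of_mem ℓ ⟨ha k, hb k⟩

lemma exists_pair_forall_mem_hull {ι : Type*} [Finite ι] [Nonempty ι] {x : ι → E}
    (e : E →ₗ[ℝ] ℝ) (he : ∀ k, 0 < e (x k)) (hx : finrank ℝ (span ℝ (range x)) ≤ 2) :
    ∃ a b, ∀ k, x k ∈ PointedCone.hull ℝ {x a, x b} := by
  obtain ⟨k₀⟩ := ‹Nonempty ι›
  set n : ι → E := fun k => (e (x k))⁻¹ • x k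
  have hn (k : ι) : e (n k) = 1 := by simp [n, (he k).ne']
  have hcol : Collinear ℝ (range n) := by
    have := FiniteDimensional.span_of_finite ℝ (finite_range x)
    rw [collinear_iff_finrank_le_one]
    have hle : vectorSpan ℝ (range n) ≤ span ℝ (range x) ⊓ LinearMap.ker e := by
      rw [vectorSpan_def, span_le]
      rintro _ ⟨_, ⟨i, rfl⟩, _, ⟨j, rfl⟩, rfl⟩
      exact ⟨sub_mem (smul_mem _ _ (subset_span ⟨i, rfl⟩)) (smul_mem _ _ (subset_span ⟨j, rfl⟩)),
        by simp [hn]⟩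
    have hlt : span ℝ (range x) ⊓ LinearMap.ker e < span ℝ (range x) :=
      inf_lt_left.2 fun h => (he k₀).ne' (h (subset_span ⟨k₀, rfl⟩))
    have := finrank_lt_finrank_of_lt hlt
    have := Submodule.finrank_mono hle
    omega
  obtain ⟨a, b, hab⟩ := hcol.exists_forall_mem_segment
  have hseg : segment ℝ (n a) (n b) ⊆ PointedCone.hull ℝ {x a, x b} :=
    (PointedCone.hull ℝ _).convex.segment_subset
      ((PointedCone.hull ℝ _).smul_mem (inv_nonneg.2 (he a).le) (PointedCone.subset_hull (by simp)))
      ((PointedCone.hull ℝ _).smul_mem (inv_nonneg.2 (he b).le) (PointedCone.subset_hull (by simp)))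
  refine ⟨a, b, fun k => ?_⟩
  have hxk : x k = e (x k) • n k := by simp [n, smul_smul, (he k).ne']
  rw [hxk]
  exact (PointedCone.hull ℝ _).smul_mem (he k).le (hseg (hab k))

lemma isSimplicial_hull_of_finrank_span_le_two {ι : Type*} [Finite ι] {x : ι → E}
    (e : E →ₗ[ℝ] ℝ) (he : ∀ k, 0 < e (x k)) (hx : finrank ℝ (span ℝ (range x)) ≤ 2) :
    (PointedCone.hull ℝ (range x)).IsSimplicial := by
  cases isEmpty_or_nonempty ι
  · exact ⟨∅, finite_empty, linearIndepOn_empty ℝ id, by simp [range_eq_empty]⟩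
  obtain ⟨a, b, hab⟩ := exists_pair_forall_mem_hull e he hx
  have hhull : PointedCone.hull ℝ {x a, x b} = PointedCone.hull ℝ (range x) :=
    le_antisymm (span_mono (by rintro _ (rfl | rfl) <;> simp))
      (span_le.2 (by rintro _ ⟨k, rfl⟩; exact hab k))
  have hxa : x a ≠ 0 := fun h => (he a).ne' (by simp [h])
  by_cases hdep : ∃ c : ℝ, c • x a = x b
  · obtain ⟨c, hc⟩ := hdep
    have hc0 : 0 ≤ c := by
      have := he b
      rw [← hc, map_smul, smul_eq_mul] at this
      exact (pos_of_mul_pos_left this (he a).le).le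
    refine ⟨{x a}, finite_singleton _, (linearIndepOn_singleton_iff _).2 hxa, ?_⟩
    rw [← hhull]
    refine le_antisymm (span_mono (by simp)) (span_le.2 ?_)
    rintro _ (rfl | rfl)
    · exact PointedCone.subset_hull rfl
    · exact hc ▸ (PointedCone.hull ℝ _).smul_mem hc0 (PointedCone.subset_hull rfl)
  · simp only [not_exists] at hdep
    exact ⟨_, toFinite _, (linearIndepOn_pair_iff id (by simpa using hdep 1) hxa).2 hdep, hhull⟩

end Simplicial

section EntanglementBreaking

variable {E : Type*} [AddCommGroup E] [Module ℝ E]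

lemma etbOn_of_isSimplicial {F : Type*} [AddCommGroup F] [Module ℝ F] {D : Set F} {P : Set E}
    {T : F → E} (hT : IsAffineOn D T) {Q : PointedCone ℝ E} (hQ : Q.IsSimplicial)
    (hQP : (Q : Set E) ⊆ P) (hTQ : ∀ x ∈ D, T x ∈ Q) : ETBOn D P T := by
  obtain ⟨s, hs, hli, rfl⟩ := hQ
  have := hs.fintype
  obtain ⟨g, hg⟩ := LinearMap.exists_leftInverse_of_injective
    (Fintype.linearCombination ℝ (Subtype.val : s → E))
    (LinearMap.ker_eq_bot.2 hli.fintypeLinearCombination_injective)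
  have hcoord (x : F) (hx : x ∈ D) :
      (∀ i, 0 ≤ g (T x) i) ∧ T x = ∑ i, g (T x) i • (i : E) := by
    have hTs : T x ∈ span {c : ℝ // 0 ≤ c} (range (Subtype.val : s → E)) := by
      rw [Subtype.range_coe]; exact hTQ x hx
    obtain ⟨c, hc⟩ := (mem_span_range_iff_exists_fun _).1 hTs
    have hTx : T x = Fintype.linearCombination ℝ (Subtype.val : s → E) fun i => (c i : ℝ) := by
      rw [← hc, Fintype.linearCombination_apply]; rfl
    have hgT : g (T x) = fun i => (c i : ℝ) := by
      rw [hTx, ← LinearMap.comp_apply, hg, LinearMap.id_apply]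
    rw [hgT]
    exact ⟨fun i => (c i).2, hTx.trans (Fintype.linearCombination_apply _ _ _)⟩
  let σ := (Fintype.equivFin s).symm
  refine ⟨Fintype.card s, fun j x => g (T x) (σ j), fun j => σ j, fun j => ?_,
    fun j x hx => (hcoord x hx).1 _, fun j => hQP (PointedCone.subset_hull (σ j).2),
    fun x hx => ?_⟩
  · exact hT.comp_linearMap (LinearMap.proj (σ j) ∘ₗ g)
  · rw [(hcoord x hx).2]
    exact (σ.sum_comp fun i => g (T x) i • (i : E)).symm

lemma etbOn_of_finrank_span_le_two {C : PointedCone ℝ E} (e : E →ₗ[ℝ] ℝ)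
    (he : ∀ v ∈ C, v ≠ 0 → 0 < e v) {W : (Fin 2 → ℝ) × (Fin 2 → ℝ) → E}
    (hW : IsAffineOn Square W) (hWC : ∀ s ∈ Square, W s ∈ C)
    (hflat : finrank ℝ (span ℝ (range (vertexImages W))) ≤ 2) : ETBOn Square C W := by
  have := FiniteDimensional.span_of_finite ℝ (finite_range (vertexImages W))
  let x : {k // vertexImages W k ≠ 0} → E := fun k => vertexImages W k
  have hxw : range x ⊆ range (vertexImages W) := by rintro _ ⟨k, rfl⟩; exact ⟨k, rfl⟩
  have hQ := isSimplicial_hull_of_finrank_span_le_two (x := x) e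
    (fun k => he _ (hWC _ (sqVert_mem_Square _ _)) k.2)
    ((Submodule.finrank_mono (span_mono hxw)).trans hflat)
  have hQC : PointedCone.hull ℝ (range x) ≤ C :=
    span_le.2 (range_subset_iff.2 fun k => hWC _ (sqVert_mem_Square _ _))
  refine etbOn_of_isSimplicial hW hQ hQC (hW.mem_of_vertex_mem _ fun k => ?_)
  by_cases hk : vertexImages W k = 0
  · rw [hk]; exact zero_mem _
  · exact PointedCone.subset_hull ⟨⟨k, hk⟩, rfl⟩

end EntanglementBreaking

section Relations

variable {E : Type*} [AddCommGroup E] [Module ℝ E]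

lemma exists_eq_smul_of_sum_smul_eq_zero {ι : Type*} [Fintype ι] {w : ι → E}
    (hw : Fintype.card ι ≤ finrank ℝ (span ℝ (range w)) + 1) {σ : ι → ℝ} (hσ : σ ≠ 0)
    (hσw : ∑ k, σ k • w k = 0) {c : ι → ℝ} (hc : ∑ k, c k • w k = 0) : ∃ r : ℝ, c = r • σ := by
  set L := Fintype.linearCombination ℝ w
  have hker : ℝ ∙ σ = LinearMap.ker L := by
    refine eq_of_le_of_finrank_le ((span_singleton_le_iff_mem _ _).2 ?_) ?_
    · simpa [L, Fintype.linearCombination_apply] using hσw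
    · have := L.finrank_range_add_finrank_ker
      rw [Fintype.range_linearCombination, Module.finrank_fintype_fun_eq_card] at this
      rw [finrank_span_singleton hσ]
      omega
  have hcL : c ∈ LinearMap.ker L := by simpa [L, Fintype.linearCombination_apply] using hc
  obtain ⟨r, hr⟩ := mem_span_singleton.1 (hker ▸ hcL)
  exact ⟨r, hr.symm⟩

variable {W : (Fin 2 → ℝ) × (Fin 2 → ℝ) → E}

lemma IsAffineOn.exists_eq_smul_squareSign (hW : IsAffineOn Square W)
    (hrank : 3 ≤ finrank ℝ (span ℝ (range (vertexImages W)))) {c : Fin 2 × Fin 2 → ℝ}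
    (hc : ∑ k, c k • vertexImages W k = 0) : ∃ r : ℝ, c = r • squareSign :=
  exists_eq_smul_of_sum_smul_eq_zero (by simpa using hrank)
    (fun h => squareSign_ne_zero (0, 0) (congrFun h _)) hW.sum_squareSign_smul hc

lemma IsAffineOn.vertexImages_ne_zero (hW : IsAffineOn Square W)
    (hrank : 3 ≤ finrank ℝ (span ℝ (range (vertexImages W)))) (k : Fin 2 × Fin 2) :
    vertexImages W k ≠ 0 := by
  intro h0
  obtain ⟨r, hr⟩ := hW.exists_eq_smul_squareSign hrank (c := Pi.single k 1) (by simp [h0])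
  obtain ⟨k', hk'⟩ := exists_ne k
  have h1 := congrFun hr k
  have h2 := congrFun hr k'
  simp only [Pi.single_eq_same, Pi.single_eq_of_ne hk', Pi.smul_apply, smul_eq_mul] at h1 h2
  rcases mul_eq_zero.1 h2.symm with rfl | h
  · simp at h1
  · exact squareSign_ne_zero k' h

lemma extremalMap_of_forall_extremalIn {P : Set E} (hW : IsAffineOn Square W)
    (hrank : 3 ≤ finrank ℝ (span ℝ (range (vertexImages W))))
    (hext : ∀ k, ExtremalIn P (vertexImages W k)) : ExtremalMap P W := by
  refine ⟨fun h => (hext (0, 0)).2.1 (h _ (sqVert_mem_Square 0 0)), fun W' hW' hW'P hWW'P => ?_⟩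
  choose t ht0 ht using fun k : Fin 2 × Fin 2 =>
    (hext k).2.2 _ (hW'P _ (sqVert_mem_Square k.1 k.2)) (hWW'P _ (sqVert_mem_Square k.1 k.2))
  obtain ⟨r, hr⟩ := hW.exists_eq_smul_squareSign hrank (c := fun k => squareSign k * t k) (by
    simpa only [vertexImages, ht, smul_smul] using hW'.sum_squareSign_smul)
  have htr (k : Fin 2 × Fin 2) : t k = r := by
    have := congrFun hr k
    simp only [Pi.smul_apply, smul_eq_mul, mul_comm r] at this
    exact mul_left_cancel₀ (squareSign_ne_zero k) this
  refine ⟨r, htr (0, 0) ▸ ht0 (0, 0), hW'.eqOn_of_vertex (hW.const_smul r) (funext fun k => ?_)⟩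
  simp only [vertexImages, ht, htr]

end Relations

section Perturbation

variable {E : Type*} [AddCommGroup E] [Module ℝ E]

lemma exists_sum_smul_eq_zero_ne_smul [FiniteDimensional ℝ E] {ι : Type*} [Fintype ι]
    (L : ι → Submodule ℝ E) (U : Submodule ℝ E) (hLU : ∀ k, L k ≤ U)
    (hdim : finrank ℝ U + 2 ≤ ∑ k, finrank ℝ (L k)) (σ : ι → ℝ) {w : ι → E}
    (hw : ∀ k, w k ∈ L k) :
    ∃ z : ι → E, (∀ k, z k ∈ L k) ∧ ∑ k, σ k • z k = 0 ∧ ∀ c : ℝ, z ≠ c • w := by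
  let ψ : (Π k, L k) →ₗ[ℝ] E := ∑ k, σ k • ((L k).subtype ∘ₗ LinearMap.proj k)
  have hψ (y : Π k, L k) : ψ y = ∑ k, σ k • (y k : E) := by simp [ψ]
  have hker : 2 ≤ finrank ℝ (LinearMap.ker ψ) := by
    have hrange : finrank ℝ (LinearMap.range ψ) ≤ finrank ℝ U := Submodule.finrank_mono <|
      LinearMap.range_le_iff_comap.2 <| eq_top_iff.2 fun y _ => by
        simpa [hψ] using sum_mem fun k _ => smul_mem _ _ (hLU k (y k).2)
    have := ψ.finrank_range_add_finrank_ker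
    rw [Module.finrank_pi_fintype] at this
    omega
  let ŵ : Π k, L k := fun k => ⟨w k, hw k⟩
  have hŵ : finrank ℝ (ℝ ∙ ŵ) ≤ 1 := by simpa using finrank_span_le_card (R := ℝ) {ŵ}
  obtain ⟨y, hy, hyŵ⟩ := SetLike.not_le_iff_exists.1 fun h : LinearMap.ker ψ ≤ ℝ ∙ ŵ => by
    have := Submodule.finrank_mono h
    omega
  refine ⟨fun k => y k, fun k => (y k).2, (hψ y).symm.trans hy, fun c hc => hyŵ ?_⟩
  exact mem_span_singleton.2 ⟨c, funext fun k => Subtype.ext (congrFun hc k).symm⟩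

lemma PointedCone.eventually_add_smul_mem (C : PointedCone ℝ E) {v w z : E} (hv : v ∈ C)
    (hwv : w - v ∈ C) (hz : z ∈ span ℝ {v, w}) : ∀ᶠ t in 𝓝 (0 : ℝ), w + t • z ∈ C := by
  obtain ⟨α, β, rfl⟩ := mem_span_pair.1 hz
  have hpos (c : ℝ) : ∀ᶠ t in 𝓝 (0 : ℝ), 0 ≤ 1 + t * c := by
    have : Tendsto (fun t : ℝ => 1 + t * c) (𝓝 0) (𝓝 1) :=
      Continuous.tendsto' (by fun_prop) _ _ (by simp)
    exact this.eventually (eventually_ge_nhds one_pos)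
  filter_upwards [hpos β, hpos (α + β)] with t h1 h2
  have : w + t • (α • v + β • w) = (1 + t * β) • (w - v) + (1 + t * (α + β)) • v := by module
  rw [this]
  exact add_mem (C.smul_mem h1 hwv) (C.smul_mem h2 hv)

lemma linearIndependent_pair_of_forall_ne_smul {C : PointedCone ℝ E} (e : E →ₗ[ℝ] ℝ)
    (he : ∀ v ∈ C, v ≠ 0 → 0 < e v) {w v : E} (hw : w ∈ C) (hw0 : w ≠ 0) (hv : v ∈ C)
    (hvw : ∀ t : ℝ, 0 ≤ t → v ≠ t • w) : LinearIndependent ℝ ![w, v] := by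
  refine (LinearIndependent.pair_iff' hw0).2 fun c hc => ?_
  rcases lt_or_ge c 0 with hc0 | hc0
  · have h := he v hv fun h0 => hw0 ((smul_eq_zero.1 (hc.trans h0)).resolve_left hc0.ne)
    rw [← hc, map_smul, smul_eq_mul] at h
    exact (mul_neg_of_neg_of_pos hc0 (he w hw hw0)).not_gt h
  · exact hvw c hc0 hc.symm

variable {W : (Fin 2 → ℝ) × (Fin 2 → ℝ) → E}

lemma ExtremalMap.exists_eq_smul_of_eventually_mem {C : PointedCone ℝ E} (hext : ExtremalMap C W)
    (hW : IsAffineOn Square W) {z : Fin 2 × Fin 2 → E} (hz : ∑ k, squareSign k • z k = 0)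
    (hzC : ∀ᶠ t in 𝓝 (0 : ℝ), ∀ k, vertexImages W k + t • z k ∈ C) :
    ∃ c : ℝ, z = c • vertexImages W := by
  have hneg : Tendsto (fun t : ℝ => -t) (𝓝 0) (𝓝 0) := by simpa using tendsto_neg (0 : ℝ)
  have hzC' : ∀ᶠ t in 𝓝[>] (0 : ℝ), (∀ k, vertexImages W k + t • z k ∈ C) ∧
      ∀ k, vertexImages W k + (-t) • z k ∈ C :=
    (hzC.and (hneg.eventually hzC)).filter_mono nhdsWithin_le_nhds
  obtain ⟨t, ⟨hplus, hminus⟩, ht⟩ := (hzC'.and self_mem_nhdsWithin).exists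
  obtain ⟨ζ, hζ, hζz⟩ := exists_isAffineOn_of_sum_squareSign_smul hz
  let W' := (2⁻¹ : ℝ) • (W + t • ζ)
  have hW' : IsAffineOn Square W' := (hW.add (hζ.const_smul t)).const_smul _
  have hW'v (k : Fin 2 × Fin 2) : vertexImages W' k = (2⁻¹ : ℝ) • (vertexImages W k + t • z k) := by
    simp [W', ← hζz, vertexImages]
  have hW'C := hW'.mem_of_vertex_mem C fun k => hW'v k ▸ C.smul_mem (by norm_num) (hplus k)
  have hWW'C := (hW.sub hW').mem_of_vertex_mem C fun k => by
    have : vertexImages (W - W') k = (2⁻¹ : ℝ) • (vertexImages W k + (-t) • z k) := by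
      simp only [vertexImages, Pi.sub_apply] at hW'v ⊢
      rw [hW'v]; module
    exact this ▸ C.smul_mem (by norm_num) (hminus k)
  obtain ⟨c, -, hc⟩ := hext.2 W' hW' hW'C hWW'C
  refine ⟨(2 * c - 1) / t, funext fun k => ?_⟩
  have hck : (2⁻¹ : ℝ) • (vertexImages W k + t • z k) = c • vertexImages W k :=
    (hW'v k).symm.trans (hc _ (sqVert_mem_Square k.1 k.2))
  have htz : t • z k = (2 * c - 1) • vertexImages W k := by
    linear_combination (norm := module) (2 : ℝ) • hck
  rw [Pi.smul_apply, div_eq_inv_mul, mul_smul, ← htz, smul_smul, inv_mul_cancel₀ ht.ne', one_smul]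

lemma ExtremalMap.extremalIn_vertexImages [FiniteDimensional ℝ E] {C : PointedCone ℝ E}
    (e : E →ₗ[ℝ] ℝ) (he : ∀ v ∈ C, v ≠ 0 → 0 < e v) (hC : finrank ℝ (span ℝ (C : Set E)) ≤ 3)
    (hW : IsAffineOn Square W) (hWC : ∀ s ∈ Square, W s ∈ C)
    (hnz : ∀ k, vertexImages W k ≠ 0) (hext : ExtremalMap C W) (k₀ : Fin 2 × Fin 2) :
    ExtremalIn C (vertexImages W k₀) := by
  set w := vertexImages W
  have hwC (k : Fin 2 × Fin 2) : w k ∈ C := hWC _ (sqVert_mem_Square _ _)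
  refine ⟨hwC k₀, hnz k₀, fun v' hv' hwv' => ?_⟩
  by_contra! hv
  let v := Function.update w k₀ v'
  have hvC (k : Fin 2 × Fin 2) : v k ∈ C ∧ w k - v k ∈ C := by
    by_cases hk : k = k₀
    · subst hk; simpa [v] using ⟨hv', hwv'⟩
    · simpa [v, hk] using hwC k
  let L (k : Fin 2 × Fin 2) : Submodule ℝ E := span ℝ {w k, v k}
  have hL₀ : 2 ≤ finrank ℝ (L k₀) := by
    have hindep := linearIndependent_pair_of_forall_ne_smul e he (hwC k₀) (hnz k₀) hv' hv
    have := finrank_span_eq_card hindep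
    rw [Matrix.range_cons_cons_empty, Fintype.card_fin] at this
    show 2 ≤ finrank ℝ (span ℝ {w k₀, v k₀})
    rw [show v k₀ = v' from Function.update_self .., this]
  have hL (k : Fin 2 × Fin 2) : 1 ≤ finrank ℝ (L k) :=
    Submodule.one_le_finrank_iff.2 <|
      (Submodule.ne_bot_iff _).2 ⟨w k, subset_span (mem_insert _ _), hnz k⟩
  have hdim : finrank ℝ (span ℝ (C : Set E)) + 2 ≤ ∑ k, finrank ℝ (L k) := by
    rw [← Finset.add_sum_erase _ _ (Finset.mem_univ k₀)]
    have := Finset.card_nsmul_le_sum (Finset.univ.erase k₀) (fun k => finrank ℝ (L k)) 1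
      fun k _ => hL k
    simp only [Finset.mem_univ, Finset.card_erase_of_mem, Finset.card_univ, Fintype.card_prod,
      Fintype.card_fin, smul_eq_mul, mul_one] at this
    omega
  obtain ⟨z, hzL, hzσ, hzw⟩ := exists_sum_smul_eq_zero_ne_smul L (span ℝ (C : Set E))
    (fun k => span_mono (insert_subset (hwC k) (singleton_subset_iff.2 (hvC k).1))) hdim
    squareSign (fun k => subset_span (mem_insert _ _))
  obtain ⟨c, hc⟩ := hext.exists_eq_smul_of_eventually_mem hW hzσ <| eventually_all.2 fun k =>
    C.eventually_add_smul_mem (hvC k).1 (hvC k).2 (by rw [pair_comm]; exact hzL k)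
  exact hzw c hc

end Perturbation

/-- for a two-dimensional state space `K` and a non-entanglement-
breaking affine map `W : □_2 → V(K)⁺`, `W` is extremal in the cone of positive
affine maps iff all four vertex images `W(s_{i,j})` are extremal in `V(K)⁺`. -/
theorem stmt_18 {E : Type*} [NormedAddCommGroup E] [NormedSpace ℝ E] [FiniteDimensional ℝ E]
    (K : Set E) (hK : Convex ℝ K) (hKc : IsCompact K) (h0 : (0 : E) ∉ K)
    (hdim : Module.finrank ℝ (vectorSpan ℝ K) = 2)
    (W : ((Fin 2 → ℝ) × (Fin 2 → ℝ)) → E)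
    (hW : IsAffineOn Square W) (hWpos : ∀ s ∈ Square, W s ∈ coneOf K)
    (hnETB : ¬ ETBOn Square (coneOf K) W) :
    ExtremalMap (coneOf K) W ↔ ∀ i j : Fin 2, ExtremalIn (coneOf K) (W (sqVert i j)) := by
  obtain ⟨x₀, hx₀⟩ : K.Nonempty := by
    obtain ⟨_, _, x, hx, _⟩ := hWpos _ (sqVert_mem_Square 0 0)
    exact ⟨x, hx⟩
  obtain ⟨C, hC⟩ := exists_pointedCone_coe_eq_coneOf hK ⟨x₀, hx₀⟩
  obtain ⟨e, he⟩ := exists_linearMap_pos_of_mem_coneOf hK hKc h0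
  have hCdim : finrank ℝ (span ℝ (C : Set E)) ≤ 3 := by
    have := finrank_span_le_finrank_vectorSpan_add_one hx₀
    rw [hC]
    exact (Submodule.finrank_mono span_coneOf_le).trans (by omega)
  rw [← hC] at hWpos hnETB he ⊢
  have hrank : 3 ≤ finrank ℝ (span ℝ (range (vertexImages W))) := by
    by_contra! h
    exact hnETB (etbOn_of_finrank_span_le_two e he hW hWpos (by omega))
  constructor
  · exact fun hext i j => hext.extremalIn_vertexImages e he hCdim hW hWpos
      (hW.vertexImages_ne_zero hrank) (i, j)
  · exact fun hext => extremalMap_of_forall_extremalIn hW hrank fun k => hext k.1 k.2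
end

section
/- Let K be a compact convex set, S = □_{k+1} the (k+1)-dimensional hypercube, and F : K → □_{k+1} an affine map (a collection of k+1 two-outcome measurements). Then F is maximally incompatible (i.e., there exists an affine map W : □_{k+1} → K with Tr FW = −k, equivalently ⟨f^i_j, w_{n_0,...,n_{i-1}, j, n_{i+1},...,n_k}⟩ = 0 for all i, j, n) if and only if F is a retraction, i.e., there exists an affine section S : □_{k+1} → K with F ∘ S = id. -/
/-- Ambient space of the hypercube `□_{k+1} = Δ_1^{k+1}`. -/
abbrev CubeAmb (k : ℕ) := Fin (k + 1) → (Fin 2 → ℝ)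

def Cube (k : ℕ) : Set (CubeAmb k) :=
  Set.univ.pi fun _ => stdSimplex ℝ (Fin 2)

/-- The vertex `s_{n_0,…,n_k}` of the hypercube. -/
def cubeVert (k : ℕ) (n : Fin (k + 1) → Fin 2) : CubeAmb k :=
  fun i => Pi.single (n i) 1

lemma cubeVert_mem (k : ℕ) (n : Fin (k + 1) → Fin 2) : cubeVert k n ∈ Cube k := by
  intro i _
  refine ⟨fun j => ?_, ?_⟩
  · by_cases h : j = n i <;> simp [cubeVert, Pi.single_apply, h]
  · simp [cubeVert]

/-- Coordinate flip of the cube. -/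
def flipC (k : ℕ) (x : CubeAmb k) : CubeAmb k := fun i j => x i (j + 1)

lemma flipC_add_smul (k : ℕ) (x y : CubeAmb k) (a b : ℝ) :
    flipC k (a • x + b • y) = a • flipC k x + b • flipC k y := rfl

lemma flipC_mem (k : ℕ) {s : CubeAmb k} (hs : s ∈ Cube k) : flipC k s ∈ Cube k := by
  intro i _
  obtain ⟨h1, h2⟩ := hs i (Set.mem_univ i)
  refine ⟨fun j => h1 _, ?_⟩
  rw [Fin.sum_univ_two] at h2 ⊢
  show s i (0 + 1) + s i (1 + 1) = 1
  have e0 : (0:Fin 2) + 1 = 1 := rfl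
  have e1 : (1:Fin 2) + 1 = 0 := rfl
  rw [e0, e1, add_comm]; exact h2

lemma flipC_vert (k : ℕ) (n : Fin (k + 1) → Fin 2) :
    flipC k (cubeVert k n) = cubeVert k (fun i => n i + 1) := by
  funext i j
  simp only [flipC, cubeVert, Pi.single_apply]
  have : (j + 1 = n i) ↔ (j = n i + 1) := by
    rcases Fin.exists_fin_two.mp ⟨j, rfl⟩ with h | h <;>
    rcases Fin.exists_fin_two.mp ⟨n i, rfl⟩ with h' | h' <;> simp [h, h']
  simp [this]

lemma update_mem_cube (k : ℕ) {s : CubeAmb k} (hs : s ∈ Cube k) (i : Fin (k + 1)) (j : Fin 2) :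
    Function.update s i (Pi.single j (1:ℝ)) ∈ Cube k := by
  intro i' _
  by_cases h : i' = i
  · subst h
    rw [Function.update_self]
    refine ⟨fun j' => ?_, ?_⟩
    · by_cases h' : j' = j <;> simp [Pi.single_apply, h']
    · simp
  · rw [Function.update_of_ne h]
    exact hs i' (Set.mem_univ i')

lemma cube_decomp (k : ℕ) {s : CubeAmb k} (hs : s ∈ Cube k) (i : Fin (k + 1)) :
    s = s i 0 • Function.update s i (Pi.single (0:Fin 2) (1:ℝ))
      + s i 1 • Function.update s i (Pi.single (1:Fin 2) (1:ℝ)) := by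
  obtain ⟨_, h2⟩ := hs i (Set.mem_univ i)
  rw [Fin.sum_univ_two] at h2
  funext i' j
  by_cases h : i' = i
  · subst h
    simp only [Pi.add_apply, Pi.smul_apply, Function.update_self, smul_eq_mul]
    fin_cases j <;> simp [Pi.single_apply]
  · simp only [Pi.add_apply, Pi.smul_apply, Function.update_of_ne h, smul_eq_mul]
    rw [← add_mul, h2, one_mul]

lemma eq_on_cube (k : ℕ) {V : Type*} [AddCommGroup V] [Module ℝ V]
    (g h : CubeAmb k → V) (hg : IsAffineOn (Cube k) g) (hh : IsAffineOn (Cube k) h)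
    (hv : ∀ n, g (cubeVert k n) = h (cubeVert k n)) :
    ∀ s ∈ Cube k, g s = h s := by
  suffices H : ∀ m : ℕ, ∀ s ∈ Cube k,
      (∀ i : Fin (k + 1), m ≤ (i : ℕ) → ∃ j, s i = Pi.single j 1) → g s = h s by
    intro s hs
    exact H (k + 1) s hs (fun i hi => absurd hi (by omega))
  intro m
  induction m with
  | zero =>
    intro s hs hvert
    choose n hn using fun i => hvert i (Nat.zero_le _)
    have hsv : s = cubeVert k n := funext fun i => hn i
    rw [hsv]; exact hv n
  | succ m ih =>
    intro s hs hvert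
    by_cases hm : m ≤ k
    · set i : Fin (k + 1) := ⟨m, by omega⟩ with hi
      have him : (i : ℕ) = m := rfl
      set x := Function.update s i (Pi.single (0:Fin 2) (1:ℝ)) with hxdef
      set y := Function.update s i (Pi.single (1:Fin 2) (1:ℝ)) with hydef
      have hx : x ∈ Cube k := update_mem_cube k hs i 0
      have hy : y ∈ Cube k := update_mem_cube k hs i 1
      obtain ⟨hpos, hsum⟩ := hs i (Set.mem_univ i)
      rw [Fin.sum_univ_two] at hsum
      have hvertx : ∀ i' : Fin (k + 1), m ≤ (i' : ℕ) → ∃ j, x i' = Pi.single j 1 := by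
        intro i' hi'
        by_cases h : i' = i
        · exact ⟨0, by rw [h, hxdef, Function.update_self]⟩
        · have : m + 1 ≤ (i' : ℕ) := by
            rcases Nat.lt_or_ge m (i' : ℕ) with h' | h'
            · omega
            · exfalso; exact h (Fin.ext (by omega))
          obtain ⟨j, hj⟩ := hvert i' this
          exact ⟨j, by rw [hxdef, Function.update_of_ne h, hj]⟩
      have hverty : ∀ i' : Fin (k + 1), m ≤ (i' : ℕ) → ∃ j, y i' = Pi.single j 1 := by
        intro i' hi'
        by_cases h : i' = i
        · exact ⟨1, by rw [h, hydef, Function.update_self]⟩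
        · have : m + 1 ≤ (i' : ℕ) := by
            rcases Nat.lt_or_ge m (i' : ℕ) with h' | h'
            · omega
            · exfalso; exact h (Fin.ext (by omega))
          obtain ⟨j, hj⟩ := hvert i' this
          exact ⟨j, by rw [hydef, Function.update_of_ne h, hj]⟩
      have hdec := cube_decomp k hs i
      calc g s = g (s i 0 • x + s i 1 • y) := by rw [← hdec]
        _ = s i 0 • g x + s i 1 • g y :=
            hg x hx y hy _ _ (hpos 0) (hpos 1) hsum
        _ = s i 0 • h x + s i 1 • h y := by
            rw [ih x hx hvertx, ih y hy hverty]
        _ = h (s i 0 • x + s i 1 • y) :=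
            (hh x hx y hy _ _ (hpos 0) (hpos 1) hsum).symm
        _ = h s := by rw [← hdec]
    · exact ih s hs (fun i' hi' => absurd hi' (by have := i'.isLt; omega))

lemma single_of_zero {x : Fin 2 → ℝ} (hsum : x 0 + x 1 = 1) {a : Fin 2} (ha : x a = 0) :
    x = Pi.single (a + 1) 1 := by
  funext j
  fin_cases a <;> fin_cases j <;>
    simp_all [Pi.single_apply]


/-- a collection `F : K → □_{k+1}` of `k+1` two-outcome
measurements is maximally incompatible — i.e. there is an affine
`W : □_{k+1} → K` with `⟨f^i_j, w_{n_0,…,n_{i-1},j,n_{i+1},…,n_k}⟩ = 0` for all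
`i, j, n` (equivalently `Tr FW = −k`) — iff `F` is a retraction, i.e. has an
affine section `S : □_{k+1} → K` with `F ∘ S = id`. -/
theorem stmt_19 (k : ℕ) {E : Type*} [AddCommGroup E] [Module ℝ E]
    (K : Set E) (hK : Convex ℝ K)
    (F : E → CubeAmb k) (hF : IsAffineOn K F) (hFC : ∀ x ∈ K, F x ∈ Cube k) :
    (∃ W : CubeAmb k → E, IsAffineOn (Cube k) W ∧ (∀ s ∈ Cube k, W s ∈ K) ∧
        ∀ (i : Fin (k + 1)) (j : Fin 2) (n : Fin (k + 1) → Fin 2),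
          F (W (cubeVert k (Function.update n i j))) i j = 0) ↔
      (∃ S : CubeAmb k → E, IsAffineOn (Cube k) S ∧ (∀ s ∈ Cube k, S s ∈ K) ∧
        ∀ s ∈ Cube k, F (S s) = s) := by
  constructor
  · rintro ⟨W, hWaff, hWK, hWcond⟩
    refine ⟨fun s => W (flipC k s), ?_, fun s hs => hWK _ (flipC_mem k hs), ?_⟩
    · intro x hx y hy a b ha hb hab
      show W (flipC k (a • x + b • y)) = a • W (flipC k x) + b • W (flipC k y)
      rw [show flipC k (a • x + b • y) = a • flipC k x + b • flipC k y from rfl]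
      exact hWaff _ (flipC_mem k hx) _ (flipC_mem k hy) a b ha hb hab
    · refine eq_on_cube k (fun s => F (W (flipC k s))) id ?_ ?_ ?_
      · intro x hx y hy a b ha hb hab
        show F (W (flipC k (a • x + b • y)))
          = a • F (W (flipC k x)) + b • F (W (flipC k y))
        rw [show flipC k (a • x + b • y) = a • flipC k x + b • flipC k y from rfl,
          hWaff _ (flipC_mem k hx) _ (flipC_mem k hy) a b ha hb hab,
          hF _ (hWK _ (flipC_mem k hx)) _ (hWK _ (flipC_mem k hy)) a b ha hb hab]
      · intro x _ y _ a b _ _ _; rfl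
      · intro n
        show F (W (flipC k (cubeVert k n))) = cubeVert k n
        rw [flipC_vert]
        set m : Fin (k + 1) → Fin 2 := fun i => n i + 1 with hm
        have hmem : W (cubeVert k m) ∈ K := hWK _ (cubeVert_mem k m)
        funext i
        have hz : F (W (cubeVert k m)) i (m i) = 0 := by
          have := hWcond i (m i) m
          rwa [Function.update_eq_self] at this
        obtain ⟨_, hsum⟩ := hFC _ hmem i (Set.mem_univ i)
        rw [Fin.sum_univ_two] at hsum
        have hni : m i + 1 = n i := by
          rcases Fin.exists_fin_two.mp ⟨n i, rfl⟩ with h | h <;> simp [hm, h]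
        show F (W (cubeVert k m)) i = Pi.single (n i) 1
        rw [single_of_zero hsum hz, hni]
  · rintro ⟨S, hSaff, hSK, hSid⟩
    refine ⟨fun s => S (flipC k s), ?_, fun s hs => hSK _ (flipC_mem k hs), ?_⟩
    · intro x hx y hy a b ha hb hab
      show S (flipC k (a • x + b • y)) = a • S (flipC k x) + b • S (flipC k y)
      rw [show flipC k (a • x + b • y) = a • flipC k x + b • flipC k y from rfl]
      exact hSaff _ (flipC_mem k hx) _ (flipC_mem k hy) a b ha hb hab
    · intro i j n
      show F (S (flipC k (cubeVert k (Function.update n i j)))) i j = 0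
      rw [flipC_vert,
        hSid _ (cubeVert_mem k (fun i' => Function.update n i j i' + 1))]
      show cubeVert k (fun i' => Function.update n i j i' + 1) i j = 0
      simp only [cubeVert]
      rw [Function.update_self]
      have : j ≠ j + 1 := by rcases Fin.exists_fin_two.mp ⟨j, rfl⟩ with h | h <;> simp [h]
      simp [Pi.single_apply, this]
end
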